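/- arXiv:2207.06925 — 2 statements merged into one kernel-verified Lean document; each statement's English description precedes it below -/
import Mathlib

section
/- The number of facets of the flow polytope F(D) of an acyclic network D equals the number of good corridors of D (assuming D has more than one s–t path). -/
open scoped Classical

variable {V : Type*} [Fintype V] [DecidableEq V]

/-- A directed graph (arc set `A`) is acyclic: no directed cycle. -/
def Acyclic (A : Finset (V × V)) : Prop :=
  ∀ v : V, ¬ Relation.TransGen (fun u w => (u, w) ∈ A) v v

/-- Sum of `x` over the arcs of `A` with tail `v`. -/
noncomputable def outSum (A : Finset (V × V)) (x : V × V → ℝ) (v : V) : ℝ :=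
  ∑ a ∈ A.filter (fun a => a.1 = v), x a

/-- Sum of `x` over the arcs of `A` with head `v`. -/
noncomputable def inSum (A : Finset (V × V)) (x : V × V → ℝ) (v : V) : ℝ :=
  ∑ a ∈ A.filter (fun a => a.2 = v), x a

/-- A flow of value 1 in the network `(V, A, s, t)`. -/
def IsFlow (A : Finset (V × V)) (s t : V) (x : V × V → ℝ) : Prop :=
  (∀ a, a ∉ A → x a = 0) ∧ (∀ a, 0 ≤ x a) ∧
    (∀ v, v ≠ s → v ≠ t → outSum A x v = inSum A x v) ∧
    outSum A x s - inSum A x s = 1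

/-- The flow polytope: all value-1 flows, as a subset of `ℝ^(V × V)`. -/
def flowPolytope (A : Finset (V × V)) (s t : V) : Set ((V × V) → ℝ) :=
  {x | IsFlow A s t x}

/-- An `s`–`t` path, given by its list of nodes. -/
def IsPath (A : Finset (V × V)) (s t : V) (p : List V) : Prop :=
  p.Chain' (fun u v => (u, v) ∈ A) ∧ p.head? = some s ∧ p.getLast? = some t ∧ p.Nodup

/-- The arcs of a path given by its node list. -/
def pathEdges (p : List V) : List (V × V) := p.zip p.tail

/-- Characteristic vector of (the arc set of) a path. -/
def chi (p : List V) : (V × V) → ℝ := fun a => if a ∈ pathEdges p then 1 else 0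

/-- Arcs lying on at least one `s`–`t` path (the arc set of the reduced network). -/
noncomputable def redArcs (A : Finset (V × V)) (s t : V) : Finset (V × V) :=
  A.filter fun a => ∃ p : List V, IsPath A s t p ∧ a ∈ pathEdges p

/-- Nodes incident to an arc of the reduced network. -/
noncomputable def redNodes (A : Finset (V × V)) (s t : V) : Finset V :=
  (redArcs A s t).image Prod.fst ∪ (redArcs A s t).image Prod.snd

/-- Out-degree in the reduced network. -/
noncomputable def dplus (A : Finset (V × V)) (s t : V) (u : V) : ℕ :=
  ((redArcs A s t).filter fun a => a.1 = u).card

/-- In-degree in the reduced network. -/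
noncomputable def dminus (A : Finset (V × V)) (s t : V) (u : V) : ℕ :=
  ((redArcs A s t).filter fun a => a.2 = u).card

/-- A corridor: a maximal path of the reduced network all of whose internal nodes
have in- and out-degree 1 in the reduced network. -/
def IsCorridor (A : Finset (V × V)) (s t : V) (c : List V) : Prop :=
  2 ≤ c.length ∧ c.Chain' (fun u v => (u, v) ∈ redArcs A s t) ∧
    (∀ v ∈ c.tail.dropLast, dminus A s t v = 1 ∧ dplus A s t v = 1) ∧
    (∀ h, c.head? = some h → dminus A s t h ≠ 1 ∨ dplus A s t h ≠ 1) ∧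
    (∀ z, c.getLast? = some z → dminus A s t z ≠ 1 ∨ dplus A s t z ≠ 1)

/-- A good corridor. -/
def IsGoodCorridor (A : Finset (V × V)) (s t : V) (c : List V) : Prop :=
  IsCorridor A s t c ∧ (∀ h, c.head? = some h → 2 ≤ dplus A s t h) ∧
    (∀ z, c.getLast? = some z → 2 ≤ dminus A s t z)

/-- A good arc: an arc belonging to some good corridor. -/
def IsGoodArc (A : Finset (V × V)) (s t : V) (a : V × V) : Prop :=
  ∃ c, IsGoodCorridor A s t c ∧ a ∈ pathEdges c

/-- Two vertices of a polytope `S` are adjacent when the segment joining them is a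
(one-dimensional) face of `S`, i.e. an exposed face. -/
def AdjacentVerts (S : Set ((V × V) → ℝ)) (x y : (V × V) → ℝ) : Prop :=
  x ≠ y ∧ IsExposed ℝ S (segment ℝ x y)

/-- A facet: a proper maximal (exposed) face. -/
def IsFacetOf (S F : Set ((V × V) → ℝ)) : Prop :=
  IsExposed ℝ S F ∧ F ≠ S ∧ ∀ G, IsExposed ℝ S G → G ≠ S → F ⊆ G → G = F

/-!
The flow polytope is the convex hull of the indicator vectors `chi p` of the `s`–`t` paths: a
flow is decomposed by peeling off a path at its bottleneck, and acyclicity rules out the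
leftover circulations. Internal nodes of the reduced network have a unique reduced successor
and predecessor, so a path using one arc of a corridor traverses the whole corridor.

For a good corridor `c` the flows vanishing on `c` form an exposed face `F_c`. It is nonempty,
since the head of `c` has a second reduced out-arc through which some path avoids `c`, and
distinct good corridors give incomparable faces, since a path through one can be rerouted at
the head or the last node of the other so as to avoid it. Conversely, the vertices of a proper
nonempty exposed face all miss some reduced arc (else a point of the face positive on every
reduced arc could be pushed out of the face inside the polytope), and following corridors
avoided by these vertices backwards and then forwards, by well-founded induction along the
acyclic order, ends at a good corridor `c` whose face `F_c` contains the given one. So the facets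
are exactly the faces `F_c`, one for each good corridor.
-/

section Lists

variable {α : Type*}

lemma List.Nodup.append_cons_inj {l₁ l₂ m₁ m₂ : List α} {v : α}
    (h : (l₁ ++ v :: l₂).Nodup) (he : l₁ ++ v :: l₂ = m₁ ++ v :: m₂) :
    l₁ = m₁ ∧ l₂ = m₂ := by
  classical
  have hv : v ∉ l₁ := fun hv => (List.nodup_append.mp h).2.2 v hv v (by simp) rfl
  have hv' : v ∉ m₁ := fun hv => (List.nodup_append.mp (he ▸ h)).2.2 v hv v (by simp) rfl
  have hlen : l₁.length = m₁.length := by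
    have := congrArg (List.idxOf v) he
    simpa [List.idxOf_append_of_notMem hv, List.idxOf_append_of_notMem hv'] using this
  simpa using List.append_inj he hlen

lemma List.mem_tail_dropLast_of_mem_dropLast {L M : List α} {u x : α} (hx : x ∈ M.dropLast) :
    x ∈ (L ++ u :: M).tail.dropLast := by
  have hM : M ≠ [] := by rintro rfl; simp at hx
  cases L with
  | nil => exact hx
  | cons l L =>
    rw [List.cons_append, List.tail_cons, List.dropLast_append_of_ne_nil (List.cons_ne_nil _ _),
      List.dropLast_cons_of_ne_nil hM]
    simp [hx]

lemma List.mem_tail_dropLast_of_mem_tail {M R : List α} {v x : α} (hx : x ∈ M.tail) :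
    x ∈ (M ++ v :: R).tail.dropLast := by
  have hM : M ≠ [] := by rintro rfl; simp at hx
  rw [List.tail_append_of_ne_nil hM, List.dropLast_append_of_ne_nil (List.cons_ne_nil _ _)]
  exact List.mem_append_left _ hx

lemma List.getLast?_append_cons_cons (L R : List α) (u v : α) :
    (L ++ u :: v :: R).getLast? = (v :: R).getLast? := by
  rw [List.getLast?_append_of_ne_nil _ (List.cons_ne_nil _ _), List.getLast?_cons_cons]

lemma List.head?_append_singleton (L M : List α) (u : α) :
    (L ++ [u]).head? = (L ++ u :: M).head? := by
  cases L <;> rfl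

lemma List.IsChain.transGen_of_cons_cons {R : α → α → Prop} {h w : α} {r : List α}
    (hc : (h :: w :: r).IsChain R) : Relation.TransGen R h ((h :: w :: r).getLast (by simp)) :=
  Relation.TransGen.head' (List.isChain_cons_cons.mp hc).1 <|
    List.relationReflTransGen_of_exists_isChain_cons r (List.isChain_cons_cons.mp hc).2 rfl

lemma List.finite_setOf_nodup [Finite α] : {l : List α | l.Nodup}.Finite :=
  have := Fintype.ofFinite α
  Set.finite_coe_iff.mp (inferInstanceAs (Finite {l : List α // l.Nodup}))

lemma List.IsChain.prefix_of_unique_succ {R : α → α → Prop} {P : α → Prop}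
    (huniq : ∀ x y z, P x → R x y → R x z → y = z) {v : α} {l₁ l₂ : List α}
    (h₁ : (v :: l₁).IsChain R) (hP₁ : ∀ x ∈ (v :: l₁).dropLast, P x)
    (h₂ : (v :: l₂).IsChain R) (hP₂ : ∀ z ∈ (v :: l₂).getLast?, ¬ P z) : l₁ <+: l₂ := by
  induction l₁ generalizing v l₂ with
  | nil => exact List.nil_prefix
  | cons w l₁ ih =>
    have hv : P v := hP₁ v (by simp)
    cases l₂ with
    | nil => exact absurd hv (hP₂ v (by simp))
    | cons w' l₂ =>
      obtain ⟨hvw, h₁'⟩ := List.isChain_cons_cons.mp h₁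
      obtain ⟨hvw', h₂'⟩ := List.isChain_cons_cons.mp h₂
      obtain rfl := huniq v w w' hv hvw hvw'
      refine List.prefix_cons_inj w |>.mpr (ih h₁' (fun x hx => hP₁ x ?_) h₂' fun z hz => hP₂ z ?_)
      · rw [List.dropLast_cons_of_ne_nil (List.cons_ne_nil _ _)]
        exact List.mem_cons_of_mem _ hx
      · rwa [List.getLast?_cons_cons]

end Lists

section PathEdges

variable {α : Type*}

@[simp] lemma pathEdges_nil : pathEdges ([] : List α) = [] := rfl

@[simp] lemma pathEdges_singleton (v : α) : pathEdges [v] = [] := rfl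

@[simp] lemma pathEdges_cons_cons (u v : α) (l : List α) :
    pathEdges (u :: v :: l) = (u, v) :: pathEdges (v :: l) := rfl

lemma pathEdges_append_cons (xs : List α) (y : α) (ys : List α) :
    pathEdges (xs ++ y :: ys) = pathEdges (xs ++ [y]) ++ pathEdges (y :: ys) := by
  induction xs with
  | nil => simp
  | cons x xs ih => cases xs <;> simp_all

lemma mem_pathEdges_iff {u v : α} {p : List α} :
    (u, v) ∈ pathEdges p ↔ ∃ l₁ l₂, p = l₁ ++ u :: v :: l₂ := by
  induction p with
  | nil => simp
  | cons x xs ih =>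
    cases xs with
    | nil => simp [List.cons_eq_append_iff]
    | cons y ys =>
      rw [pathEdges_cons_cons, List.mem_cons, ih]
      constructor
      · rintro (h | ⟨l₁, l₂, h⟩)
        · obtain ⟨rfl, rfl⟩ := Prod.mk.inj h
          exact ⟨[], ys, rfl⟩
        · exact ⟨x :: l₁, l₂, by rw [h]; rfl⟩
      · rintro ⟨_ | ⟨z, l₁⟩, l₂, h⟩
        · simp_all
        · simp only [List.cons_append, List.cons.injEq] at h
          exact Or.inr ⟨l₁, l₂, h.2⟩

lemma mem_pathEdges_append_cons_cons (l₁ l₂ : List α) (u v : α) :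
    (u, v) ∈ pathEdges (l₁ ++ u :: v :: l₂) :=
  mem_pathEdges_iff.mpr ⟨l₁, l₂, rfl⟩

lemma map_fst_pathEdges (p : List α) : (pathEdges p).map Prod.fst = p.dropLast := by
  induction p with
  | nil => rfl
  | cons x xs ih => cases xs <;> simp_all

lemma map_snd_pathEdges (p : List α) : (pathEdges p).map Prod.snd = p.tail := by
  induction p with
  | nil => rfl
  | cons x xs ih => cases xs <;> simp_all

lemma fst_mem_dropLast_of_mem_pathEdges {a : α × α} {p : List α} (h : a ∈ pathEdges p) :
    a.1 ∈ p.dropLast := map_fst_pathEdges p ▸ List.mem_map_of_mem h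

lemma snd_mem_tail_of_mem_pathEdges {a : α × α} {p : List α} (h : a ∈ pathEdges p) :
    a.2 ∈ p.tail := map_snd_pathEdges p ▸ List.mem_map_of_mem h

lemma fst_mem_of_mem_pathEdges {a : α × α} {p : List α} (h : a ∈ pathEdges p) : a.1 ∈ p :=
  (List.dropLast_sublist p).mem (fst_mem_dropLast_of_mem_pathEdges h)

lemma snd_mem_of_mem_pathEdges {a : α × α} {p : List α} (h : a ∈ pathEdges p) : a.2 ∈ p :=
  (List.tail_sublist p).mem (snd_mem_tail_of_mem_pathEdges h)

lemma pathEdges_nodup {p : List α} (h : p.Nodup) : (pathEdges p).Nodup := by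
  have h' := h.sublist (List.dropLast_sublist p)
  rw [← map_fst_pathEdges] at h'
  exact h'.of_map _

lemma List.IsChain.rel_of_mem_pathEdges {R : α → α → Prop} {l : List α} (h : l.IsChain R)
    {u v : α} (huv : (u, v) ∈ pathEdges l) : R u v := by
  obtain ⟨l₁, l₂, rfl⟩ := mem_pathEdges_iff.mp huv
  exact (List.isChain_cons_cons.mp (h.right_of_append)).1

lemma isChain_mem_pathEdges (l : List α) : l.IsChain (fun u v => (u, v) ∈ pathEdges l) := by
  induction l with
  | nil => exact .nil
  | cons x xs ih =>
    cases xs with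
    | nil => exact .singleton x
    | cons y ys =>
      refine List.isChain_cons_cons.mpr ⟨by simp, ih.imp fun u v h => ?_⟩
      rw [pathEdges_cons_cons]
      exact List.mem_cons_of_mem _ h

lemma List.IsInfix.pathEdges_subset {l₁ l₂ : List α} (h : l₁ <:+: l₂) :
    ∀ e ∈ pathEdges l₁, e ∈ pathEdges l₂ := by
  obtain ⟨S, T, rfl⟩ := h
  rintro ⟨u, v⟩ he
  obtain ⟨X, Y, rfl⟩ := mem_pathEdges_iff.mp he
  exact mem_pathEdges_iff.mpr ⟨S ++ X, Y ++ T, by simp⟩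

lemma pathEdges_append_append {X c T : List α} (hc : c ≠ []) :
    pathEdges (X ++ c ++ T)
      = pathEdges (X ++ [c.head hc]) ++ pathEdges c ++ pathEdges (c.getLast hc :: T) := by
  have hhead : c.head hc :: (c.tail ++ T) = c ++ T := by
    rw [← List.cons_append, List.cons_head_tail]
  have hlast : c ++ T = c.dropLast ++ c.getLast hc :: T := by
    rw [← List.singleton_append, ← List.append_assoc, List.dropLast_append_getLast]
  rw [List.append_assoc, ← hhead, pathEdges_append_cons X, hhead, hlast,
    pathEdges_append_cons c.dropLast, List.dropLast_append_getLast, List.append_assoc]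

lemma List.Nodup.succ_unique {p : List α} (hp : p.Nodup) {u v w : α}
    (hv : (u, v) ∈ pathEdges p) (hw : (u, w) ∈ pathEdges p) : v = w := by
  obtain ⟨l₁, l₂, rfl⟩ := mem_pathEdges_iff.mp hv
  obtain ⟨m₁, m₂, he⟩ := mem_pathEdges_iff.mp hw
  exact (List.cons.inj (hp.append_cons_inj he).2).1

lemma List.Nodup.pred_unique {p : List α} (hp : p.Nodup) {u v w : α}
    (hu : (u, v) ∈ pathEdges p) (hw : (w, v) ∈ pathEdges p) : u = w := by
  obtain ⟨l₁, l₂, rfl⟩ := mem_pathEdges_iff.mp hu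
  obtain ⟨m₁, m₂, he⟩ := mem_pathEdges_iff.mp hw
  rw [show l₁ ++ u :: v :: l₂ = (l₁ ++ [u]) ++ v :: l₂ by simp,
    show m₁ ++ w :: v :: m₂ = (m₁ ++ [w]) ++ v :: m₂ by simp] at he
  have hp' : ((l₁ ++ [u]) ++ v :: l₂).Nodup := by simpa using hp
  exact (List.append_inj' (hp'.append_cons_inj he).1 rfl).2 |> List.singleton_inj.mp

end PathEdges

section ExposedFaces

variable {E : Type*} [AddCommGroup E] [Module ℝ E] [TopologicalSpace E]

lemma IsExposed.subset_convexHull_inter {X : Finset E} {G : Set E}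
    (hG : IsExposed ℝ (convexHull ℝ (X : Set E)) G) : G ⊆ convexHull ℝ (↑X ∩ G) := by
  classical
  intro x hx
  obtain ⟨l, rfl⟩ := hG ⟨x, hx⟩
  obtain ⟨w, hw0, hw1, rfl⟩ := Finset.mem_convexHull.mp hx.1
  have hlx : l (X.centerMass w id) = ∑ y ∈ X, w y * l y := by
    rw [Finset.centerMass_eq_of_sum_1 _ _ hw1, map_sum]
    simp
  have heq : ∀ y ∈ X, w y * l y = w y * l (X.centerMass w id) :=
    (Finset.sum_eq_sum_iff_of_le fun y hy => mul_le_mul_of_nonneg_left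
      (hx.2 y (subset_convexHull ℝ _ hy)) (hw0 y hy)).mp <| by
        rw [← Finset.sum_mul, hw1, one_mul, hlx]
  rw [← Finset.centerMass_filter_ne_zero]
  refine Finset.centerMass_mem_convexHull _ (fun y hy => hw0 y (Finset.mem_filter.mp hy).1)
    (by rw [Finset.sum_filter_ne_zero, hw1]; exact one_pos) fun y hy => ?_
  obtain ⟨hyX, hwy⟩ := Finset.mem_filter.mp hy
  refine ⟨hyX, subset_convexHull ℝ _ hyX, fun z hz => ?_⟩
  rw [id, mul_left_cancel₀ hwy (heq y hyX)]
  exact hx.2 z hz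

lemma IsExposed.add_smul_sub_notMem {S G : Set E} (hG : IsExposed ℝ S G) {x y : E}
    (hy : y ∈ G) (hx : x ∈ S) (hxG : x ∉ G) {ε : ℝ} (hε : 0 < ε) : y + ε • (y - x) ∉ S := by
  obtain ⟨l, rfl⟩ := hG ⟨y, hy⟩
  intro hz
  have hle := hy.2 _ hz
  rw [map_add, map_smul, map_sub, smul_eq_mul] at hle
  have hlx : l y ≤ l x := by nlinarith
  exact hxG ⟨hx, fun z hz => (hy.2 z hz).trans hlx⟩

end ExposedFaces

section Coordinates

variable {ι : Type*}

lemma isExposed_setOf_forall_eq_zero {S : Set (ι → ℝ)} (hS : ∀ x ∈ S, ∀ i, 0 ≤ x i)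
    (T : Finset ι) : IsExposed ℝ S {x ∈ S | ∀ i ∈ T, x i = 0} := by
  rintro ⟨x₀, hx₀S, hx₀⟩
  refine ⟨-(∑ i ∈ T, ContinuousLinearMap.proj (R := ℝ) (φ := fun _ : ι => ℝ) i), ?_⟩
  ext x
  simp only [Set.mem_ofPred_eq, neg_apply, FunLike.coe_sum,
    Finset.sum_apply, ContinuousLinearMap.proj_apply, neg_le_neg_iff]
  refine and_congr_right fun hxS => ⟨fun hx y hyS => ?_, fun hx => ?_⟩
  · rw [Finset.sum_eq_zero hx]
    exact Finset.sum_nonneg fun i _ => hS y hyS i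
  · have h0 := hx x₀ hx₀S
    rw [Finset.sum_eq_zero hx₀] at h0
    exact (Finset.sum_eq_zero_iff_of_nonneg fun i _ => hS x hxS i).mp
      (le_antisymm h0 (Finset.sum_nonneg fun i _ => hS x hxS i))

lemma Convex.exists_forall_pos {G : Set (ι → ℝ)} (hG : Convex ℝ G)
    (hnn : ∀ y ∈ G, ∀ i, 0 ≤ y i) (hne : G.Nonempty) (T : Finset ι)
    (hT : ∀ i ∈ T, ∃ y ∈ G, 0 < y i) : ∃ y ∈ G, ∀ i ∈ T, 0 < y i := by
  classical
  induction T using Finset.induction_on with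
  | empty => exact ⟨hne.some, hne.some_mem, by simp⟩
  | insert i T _ ih =>
    obtain ⟨y, hyG, hy⟩ := ih fun j hj => hT j (Finset.mem_insert_of_mem hj)
    obtain ⟨y', hy'G, hy'⟩ := hT i (Finset.mem_insert_self i T)
    refine ⟨(1 / 2 : ℝ) • y + (1 / 2 : ℝ) • y', hG hyG hy'G (by norm_num) (by norm_num)
      (by norm_num), fun j hj => ?_⟩
    simp only [Pi.add_apply, Pi.smul_apply, smul_eq_mul]
    rcases Finset.mem_insert.mp hj with rfl | hj
    · linarith [hnn y hyG j]
    · linarith [hy j hj, hnn y' hy'G j]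

end Coordinates

section Paths

omit [Fintype V] [DecidableEq V]

variable {A : Finset (V × V)} {s t : V} {p q : List V}

lemma Acyclic.nodup_of_isChain (hA : Acyclic A) {l : List V}
    (h : l.IsChain fun u v => (u, v) ∈ A) : l.Nodup := by
  have : IsTrans V (Relation.TransGen fun u w => (u, w) ∈ A) := ⟨fun _ _ _ => .trans⟩
  refine (List.isChain_iff_pairwise.mp (h.imp fun _ _ hab => Relation.TransGen.single hab)).imp ?_
  rintro a b hab rfl
  exact hA a hab

lemma IsPath.nodup (h : IsPath A s t p) : p.Nodup := h.2.2.2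

lemma IsPath.ne_nil (h : IsPath A s t p) : p ≠ [] := by
  rintro rfl
  simp [IsPath] at h

lemma IsPath.eq_cons (h : IsPath A s t p) : p = s :: p.tail := by
  obtain ⟨-, hs, -⟩ := h
  cases p <;> simp_all

lemma IsPath.eq_dropLast_append (h : IsPath A s t p) : p = p.dropLast ++ [t] := by
  have ht := h.2.2.1
  rw [List.getLast?_eq_some_getLast h.ne_nil, Option.some.injEq] at ht
  conv_lhs => rw [← List.dropLast_append_getLast h.ne_nil, ht]

lemma IsPath.source_mem (h : IsPath A s t p) : s ∈ p := by
  rw [h.eq_cons]; exact List.mem_cons_self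

lemma IsPath.target_mem (h : IsPath A s t p) : t ∈ p := by
  rw [h.eq_dropLast_append]; simp

lemma IsPath.mem_tail_iff (h : IsPath A s t p) {v : V} : v ∈ p.tail ↔ v ∈ p ∧ v ≠ s := by
  have hnd := h.nodup
  rw [h.eq_cons] at hnd ⊢
  simp only [List.tail_cons, List.mem_cons]
  constructor
  · rintro hv
    exact ⟨Or.inr hv, by rintro rfl; exact (List.nodup_cons.mp hnd).1 hv⟩
  · rintro ⟨rfl | hv, hne⟩
    exacts [absurd rfl hne, hv]

lemma IsPath.mem_dropLast_iff (h : IsPath A s t p) {v : V} :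
    v ∈ p.dropLast ↔ v ∈ p ∧ v ≠ t := by
  have hnd := h.nodup
  rw [h.eq_dropLast_append] at hnd ⊢
  rw [List.dropLast_concat]
  simp only [List.mem_append, List.mem_singleton]
  constructor
  · rintro hv
    exact ⟨Or.inl hv, by rintro rfl; exact List.disjoint_of_nodup_append hnd hv (by simp)⟩
  · rintro ⟨hv | rfl, hne⟩
    exacts [hv, absurd rfl hne]

lemma IsPath.exists_pred (h : IsPath A s t p) {v : V} (hv : v ∈ p) (hne : v ≠ s) :
    ∃ u, (u, v) ∈ pathEdges p := by
  have hv' := h.mem_tail_iff.mpr ⟨hv, hne⟩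
  rw [← map_snd_pathEdges] at hv'
  obtain ⟨⟨u, _⟩, ha, rfl⟩ := List.mem_map.mp hv'
  exact ⟨u, ha⟩

lemma IsPath.exists_succ (h : IsPath A s t p) {v : V} (hv : v ∈ p) (hne : v ≠ t) :
    ∃ w, (v, w) ∈ pathEdges p := by
  have hv' := h.mem_dropLast_iff.mpr ⟨hv, hne⟩
  rw [← map_fst_pathEdges] at hv'
  obtain ⟨⟨_, w⟩, ha, rfl⟩ := List.mem_map.mp hv'
  exact ⟨w, ha⟩

lemma IsPath.mem_of_mem_pathEdges (h : IsPath A s t p) {a : V × V} (ha : a ∈ pathEdges p) :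
    a ∈ A :=
  h.1.rel_of_mem_pathEdges ha

lemma IsPath.pathEdges_ne_nil (hp : IsPath A s t p) (hst : s ≠ t) : pathEdges p ≠ [] := by
  intro h
  have hs := hp.mem_dropLast_iff.mpr ⟨hp.source_mem, hst⟩
  rw [← map_fst_pathEdges, h] at hs
  simp at hs

lemma IsPath.eq_singleton_of_target_eq_source (h : IsPath A s s p) : p = [s] := by
  have hs : s ∉ p.dropLast := fun hs => (h.mem_dropLast_iff.mp hs).2 rfl
  rw [h.eq_cons] at hs ⊢
  by_contra hne
  rw [List.dropLast_cons_of_ne_nil fun h => hne (by rw [h])] at hs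
  exact hs List.mem_cons_self

lemma IsPath.splice (hA : Acyclic A) (hp : IsPath A s t p) (hq : IsPath A s t q)
    {p₁ p₂ q₁ q₂ : List V} {u w : V}
    (hsp : p = p₁ ++ u :: p₂) (hsq : q = q₁ ++ w :: q₂) (huw : (u, w) ∈ A) :
    IsPath A s t (p₁ ++ u :: w :: q₂) := by
  have hpre : (p₁ ++ [u]).IsChain fun a b => (a, b) ∈ A :=
    hp.1.prefix ⟨p₂, by rw [hsp]; simp⟩
  have hsuf : (w :: q₂).IsChain fun a b => (a, b) ∈ A := hq.1.suffix ⟨q₁, hsq.symm⟩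
  have hchain : (p₁ ++ u :: w :: q₂).IsChain fun a b => (a, b) ∈ A := by
    rw [show p₁ ++ u :: w :: q₂ = (p₁ ++ [u]) ++ w :: q₂ by simp]
    exact List.isChain_append.mpr ⟨hpre, hsuf, by simp_all⟩
  refine ⟨hchain, ?_, ?_, hA.nodup_of_isChain hchain⟩
  · rw [← hp.2.1, hsp]
    cases p₁ <;> rfl
  · rw [← hq.2.2.1, hsq]
    rw [show p₁ ++ u :: w :: q₂ = (p₁ ++ [u]) ++ w :: q₂ by simp,
      List.getLast?_append_of_ne_nil _ (List.cons_ne_nil _ _),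
      List.getLast?_append_of_ne_nil _ (List.cons_ne_nil _ _)]

lemma IsPath.eq_of_pathEdges_subset (hp : IsPath A s t p) (hq : IsPath A s t q)
    (hsub : ∀ e ∈ pathEdges q, e ∈ pathEdges p) : q = p := by
  have huniq : ∀ x y z, x ≠ t → (x, y) ∈ pathEdges p → (x, z) ∈ pathEdges p → y = z :=
    fun _ _ _ _ => hp.nodup.succ_unique
  have hchain_p := isChain_mem_pathEdges p
  have hchain_q := (isChain_mem_pathEdges q).imp fun _ _ h => hsub _ h
  have hlast {r : List V} (hr : IsPath A s t r) : ∀ z ∈ r.getLast?, ¬ z ≠ t := by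
    simp [hr.2.2.1]
  have hdrop {r : List V} (hr : IsPath A s t r) : ∀ x ∈ r.dropLast, x ≠ t :=
    fun _ hx => (hr.mem_dropLast_iff.mp hx).2
  have hprefix {r r' : List V} (hr : IsPath A s t r) (hr' : IsPath A s t r')
      (hchain : r.IsChain fun x y => (x, y) ∈ pathEdges p)
      (hchain' : r'.IsChain fun x y => (x, y) ∈ pathEdges p) : r.tail <+: r'.tail :=
    List.IsChain.prefix_of_unique_succ huniq (by rwa [← hr.eq_cons])
      (by rw [← hr.eq_cons]; exact hdrop hr) (by rwa [← hr'.eq_cons])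
      (by rw [← hr'.eq_cons]; exact hlast hr')
  have h₁ := hprefix hq hp hchain_q hchain_p
  rw [hq.eq_cons, hp.eq_cons,
    h₁.eq_of_length (h₁.length_le.antisymm (hprefix hp hq hchain_p hchain_q).length_le)]

lemma redArcs_subset : redArcs A s t ⊆ A := Finset.filter_subset _ _

lemma exists_path_of_mem_redArcs {a : V × V} (ha : a ∈ redArcs A s t) :
    ∃ p, IsPath A s t p ∧ a ∈ pathEdges p :=
  (Finset.mem_filter.mp ha).2

lemma IsPath.mem_redArcs (hp : IsPath A s t p) {a : V × V} (ha : a ∈ pathEdges p) :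
    a ∈ redArcs A s t :=
  Finset.mem_filter.mpr ⟨hp.mem_of_mem_pathEdges ha, p, hp, ha⟩

lemma IsPath.isChain_redArcs (hp : IsPath A s t p) :
    p.IsChain fun u v => (u, v) ∈ redArcs A s t :=
  (isChain_mem_pathEdges p).imp fun _ _ h => hp.mem_redArcs h

lemma Acyclic.nodup_of_isChain_redArcs (hA : Acyclic A) {l : List V}
    (h : l.IsChain fun u v => (u, v) ∈ redArcs A s t) : l.Nodup :=
  hA.nodup_of_isChain (h.imp fun _ _ hab => redArcs_subset hab)

end Paths

section Flows

omit [Fintype V]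

variable {A : Finset (V × V)} {s t : V} {p : List V} {x y : (V × V) → ℝ}

lemma outSum_smul_add_smul (a b : ℝ) (x y : (V × V) → ℝ) (v : V) :
    outSum A (a • x + b • y) v = a * outSum A x v + b * outSum A y v := by
  simp [outSum, Finset.sum_add_distrib, Finset.mul_sum]

lemma inSum_smul_add_smul (a b : ℝ) (x y : (V × V) → ℝ) (v : V) :
    inSum A (a • x + b • y) v = a * inSum A x v + b * inSum A y v := by
  simp [inSum, Finset.sum_add_distrib, Finset.mul_sum]

lemma IsFlow.smul_add_smul (hx : IsFlow A s t x) (hy : IsFlow A s t y) {a b : ℝ}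
    (hab : a + b = 1) (hnn : ∀ e, 0 ≤ a * x e + b * y e) : IsFlow A s t (a • x + b • y) := by
  refine ⟨fun e he => by simp [hx.1 e he, hy.1 e he], hnn, fun v hvs hvt => ?_, ?_⟩
  · rw [outSum_smul_add_smul, inSum_smul_add_smul, hx.2.2.1 v hvs hvt, hy.2.2.1 v hvs hvt]
  · rw [outSum_smul_add_smul, inSum_smul_add_smul]
    linear_combination a * hx.2.2.2 + b * hy.2.2.2 + hab

lemma convex_flowPolytope : Convex ℝ (flowPolytope A s t) :=
  fun _ hx _ hy _ _ ha hb hab => IsFlow.smul_add_smul hx hy hab fun e =>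
    add_nonneg (mul_nonneg ha (hx.2.1 e)) (mul_nonneg hb (hy.2.1 e))

lemma sum_outSum (T : Finset V) (x : (V × V) → ℝ) :
    ∑ v ∈ T, outSum A x v = ∑ a ∈ A, if a.1 ∈ T then x a else 0 := by
  simp only [outSum, Finset.sum_filter]
  rw [Finset.sum_comm]
  simp [eq_comm]

lemma sum_inSum (T : Finset V) (x : (V × V) → ℝ) :
    ∑ v ∈ T, inSum A x v = ∑ a ∈ A, if a.2 ∈ T then x a else 0 := by
  simp only [inSum, Finset.sum_filter]
  rw [Finset.sum_comm]
  simp [eq_comm]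

lemma sum_chi_filter (hp : IsPath A s t p) (f : V × V → V) (v : V) :
    ∑ a ∈ A.filter (fun a => f a = v), chi p a = ((pathEdges p).map f).count v := by
  have hE : (A.filter fun a => f a = v).filter (· ∈ pathEdges p)
      = ((pathEdges p).filter fun a => f a = v).toFinset := by
    ext a
    simp only [Finset.mem_filter, List.mem_toFinset, List.mem_filter, decide_eq_true_eq]
    exact ⟨fun ⟨⟨_, h⟩, hm⟩ => ⟨hm, h⟩, fun ⟨hm, h⟩ => ⟨⟨hp.mem_of_mem_pathEdges hm, h⟩, hm⟩⟩
  have hcard : ∑ a ∈ A.filter (fun a => f a = v), chi p a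
      = (((A.filter fun a => f a = v).filter (· ∈ pathEdges p)).card : ℝ) := by
    simp [chi, Finset.sum_boole]
  rw [hcard, hE, List.toFinset_card_of_nodup ((pathEdges_nodup hp.nodup).filter _),
    ← List.countP_eq_length_filter, List.count, List.countP_map]
  simp only [Function.comp_def]
  congr 3

lemma outSum_chi (hp : IsPath A s t p) (v : V) :
    outSum A (chi p) v = if v ∈ p ∧ v ≠ t then 1 else 0 := by
  rw [outSum, sum_chi_filter hp, map_fst_pathEdges,
    (hp.nodup.sublist (List.dropLast_sublist p)).count]
  simp [hp.mem_dropLast_iff]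

lemma inSum_chi (hp : IsPath A s t p) (v : V) :
    inSum A (chi p) v = if v ∈ p ∧ v ≠ s then 1 else 0 := by
  rw [inSum, sum_chi_filter hp, map_snd_pathEdges,
    (hp.nodup.sublist (List.tail_sublist p)).count]
  simp [hp.mem_tail_iff]

lemma chi_nonneg (p : List V) (a : V × V) : 0 ≤ chi p a := by
  unfold chi; split_ifs <;> norm_num

lemma IsPath.chi_mem_flowPolytope (hp : IsPath A s t p) (hst : s ≠ t) :
    chi p ∈ flowPolytope A s t := by
  refine ⟨fun a ha => if_neg fun hm => ha (hp.mem_of_mem_pathEdges hm), chi_nonneg p,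
    fun v hvs hvt => ?_, ?_⟩
  · simp [outSum_chi hp, inSum_chi hp, hvs, hvt]
  · simp [outSum_chi hp, inSum_chi hp, hp.source_mem, hst]

lemma IsFlow.sub_smul_chi (hst : s ≠ t) (hx : IsFlow A s t x) (hp : IsPath A s t p)
    {ε : ℝ} (hε1 : ε < 1) (hle : ∀ a ∈ pathEdges p, ε ≤ x a) :
    IsFlow A s t ((1 - ε)⁻¹ • (x - ε • chi p)) := by
  have hinv : 0 < (1 - ε)⁻¹ := inv_pos.mpr (by linarith)
  have h := hx.smul_add_smul (hp.chi_mem_flowPolytope hst) (a := (1 - ε)⁻¹)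
    (b := -(ε * (1 - ε)⁻¹)) (by field_simp [(sub_pos.mpr hε1).ne']; ring) fun a => by
      rw [show (1 - ε)⁻¹ * x a + -(ε * (1 - ε)⁻¹) * chi p a
        = (1 - ε)⁻¹ * (x a - ε * chi p a) by ring]
      refine mul_nonneg hinv.le ?_
      by_cases ha : a ∈ pathEdges p
      · simpa [chi, ha] using hle a ha
      · simpa [chi, ha] using hx.2.1 a
  convert h using 1
  ext a
  simp only [Pi.smul_apply, Pi.sub_apply, Pi.add_apply, smul_eq_mul]
  ring

lemma support_sub_smul_chi_ssubset (hp : IsPath A s t p) {ε : ℝ} (hε : 0 < ε) (hε1 : ε < 1)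
    (hle : ∀ a ∈ pathEdges p, ε ≤ x a) {b : V × V} (hbp : b ∈ pathEdges p) (hb : x b = ε) :
    (A.filter fun a => 0 < ((1 - ε)⁻¹ • (x - ε • chi p)) a) ⊂ A.filter fun a => 0 < x a := by
  have hinv : 0 < (1 - ε)⁻¹ := inv_pos.mpr (by linarith)
  refine Finset.ssubset_iff_of_subset (fun a ha => ?_) |>.mpr ⟨b, ?_, ?_⟩
  · obtain ⟨haA, hpos⟩ := Finset.mem_filter.mp ha
    refine Finset.mem_filter.mpr ⟨haA, ?_⟩
    by_cases hap : a ∈ pathEdges p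
    · exact hε.trans_le (hle a hap)
    · simpa [chi, hap, hinv] using hpos
  · exact Finset.mem_filter.mpr ⟨hp.mem_of_mem_pathEdges hbp, hb ▸ hε⟩
  · simp [chi, hbp, hb]

lemma IsFlow.add_smul_sub_chi (hst : s ≠ t) {y : (V × V) → ℝ} (hy : IsFlow A s t y)
    (hp : IsPath A s t p) {ε : ℝ} (hε : 0 ≤ ε) (hle : ∀ a ∈ pathEdges p, ε ≤ y a) :
    IsFlow A s t (y + ε • (y - chi p)) := by
  have h := hy.smul_add_smul (hp.chi_mem_flowPolytope hst) (a := 1 + ε) (b := -ε) (by ring)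
    fun a => by
      by_cases ha : a ∈ pathEdges p
      · simp only [chi, ha, if_true]
        nlinarith [hle a ha, hy.2.1 a]
      · simp only [chi, ha, if_false]
        nlinarith [hy.2.1 a]
  convert h using 1
  ext a
  simp only [Pi.add_apply, Pi.smul_apply, Pi.sub_apply, smul_eq_mul]
  ring

end Flows

section Decomposition

variable {A : Finset (V × V)} {s t : V} {p : List V} {x : (V × V) → ℝ}

omit [DecidableEq V] in
lemma Acyclic.wellFounded (hA : Acyclic A) :
    WellFounded (Relation.TransGen fun u v => (u, v) ∈ A) :=
  have : IsTrans V (Relation.TransGen fun u v => (u, v) ∈ A) := ⟨fun _ _ _ => .trans⟩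
  have : Std.Irrefl (Relation.TransGen fun u v => (u, v) ∈ A) := ⟨hA⟩
  Finite.wellFounded_of_trans_of_irrefl _

omit [DecidableEq V] in
lemma Acyclic.wellFounded_swap (hA : Acyclic A) :
    WellFounded (Function.swap (Relation.TransGen fun u v => (u, v) ∈ A)) :=
  have : IsTrans V (Function.swap (Relation.TransGen fun u v => (u, v) ∈ A)) :=
    ⟨fun _ _ _ h₁ h₂ => h₂.trans h₁⟩
  have : Std.Irrefl (Function.swap (Relation.TransGen fun u v => (u, v) ∈ A)) := ⟨hA⟩
  Finite.wellFounded_of_trans_of_irrefl _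

/-- An arc of positive flow with earliest tail would need a positive arc into that tail. -/
lemma Acyclic.eq_zero_of_circulation (hA : Acyclic A) (hA0 : ∀ a, a ∉ A → x a = 0)
    (hnn : ∀ a, 0 ≤ x a) (hcons : ∀ v, outSum A x v = inSum A x v) : x = 0 := by
  by_contra hx
  obtain ⟨a₀, ha₀⟩ := Function.ne_iff.mp hx
  have hpos : ∀ a, x a ≠ 0 → a ∈ A ∧ 0 < x a := fun a ha =>
    ⟨by_contra fun h => ha (hA0 a h), lt_of_le_of_ne (hnn a) (Ne.symm ha)⟩
  obtain ⟨u, ⟨a, ha, rfl⟩, hmin⟩ :=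
    hA.wellFounded.has_min (Prod.fst '' {a | x a ≠ 0}) ⟨a₀.1, a₀, ha₀, rfl⟩
  have hout : 0 < outSum A x a.1 :=
    lt_of_lt_of_le (hpos a ha).2 (Finset.single_le_sum (fun b _ => hnn b)
      (Finset.mem_filter.mpr ⟨(hpos a ha).1, rfl⟩))
  obtain ⟨b, hb, hxb⟩ : ∃ b ∈ A.filter (fun b => b.2 = a.1), 0 < x b := by
    by_contra! h
    exact (hcons a.1 ▸ hout).not_ge (Finset.sum_nonpos h)
  obtain ⟨hbA, hb2⟩ := Finset.mem_filter.mp hb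
  refine hmin b.1 ⟨b, hxb.ne', rfl⟩ (Relation.TransGen.single ?_)
  rwa [← hb2]

/-- Otherwise the nodes reachable from `s` along positive arcs would form a set with net
outflow `1` that no positive arc leaves. -/
lemma IsFlow.reflTransGen_pos (hx : IsFlow A s t x) :
    Relation.ReflTransGen (fun u w => (u, w) ∈ A ∧ 0 < x (u, w)) s t := by
  set T := Finset.univ.filter fun v => Relation.ReflTransGen
    (fun u w => (u, w) ∈ A ∧ 0 < x (u, w)) s v
  have hsT : s ∈ T := Finset.mem_filter.mpr ⟨Finset.mem_univ _, .refl⟩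
  by_contra ht
  have htT : t ∉ T := by simpa [T] using ht
  have hnet : ∑ v ∈ T, (outSum A x v - inSum A x v) = 1 := by
    rw [Finset.sum_eq_single_of_mem s hsT fun v hv hvs => by
      rw [hx.2.2.1 v hvs fun h => htT (h ▸ hv), sub_self]]
    exact hx.2.2.2
  have hclosed : ∀ a ∈ A, a.1 ∈ T → a.2 ∉ T → x a = 0 := fun a ha h1 h2 => by
    refine le_antisymm (not_lt.mp fun hpos => h2 ?_) (hx.2.1 a)
    simp only [T, Finset.mem_filter, Finset.mem_univ, true_and] at h1 ⊢
    exact h1.tail ⟨ha, hpos⟩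
  have hout : ∑ v ∈ T, outSum A x v ≤ ∑ v ∈ T, inSum A x v := by
    rw [sum_outSum, sum_inSum]
    refine Finset.sum_le_sum fun a ha => ?_
    by_cases h1 : a.1 ∈ T <;> by_cases h2 : a.2 ∈ T <;>
      simp [h1, h2, hclosed a ha, hx.2.1 a]
  rw [Finset.sum_sub_distrib] at hnet
  linarith

lemma IsFlow.exists_path_pos (hA : Acyclic A) (hx : IsFlow A s t x) :
    ∃ p, IsPath A s t p ∧ ∀ a ∈ pathEdges p, 0 < x a := by
  obtain ⟨l, hchain, hlast⟩ :=
    List.exists_isChain_cons_of_relationReflTransGen hx.reflTransGen_pos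
  have hchainA : (s :: l).IsChain fun u w => (u, w) ∈ A := hchain.imp fun _ _ h => h.1
  refine ⟨s :: l, ⟨hchainA, rfl, ?_, hA.nodup_of_isChain hchainA⟩,
    fun a ha => (hchain.rel_of_mem_pathEdges ha).2⟩
  rw [List.getLast?_eq_some_getLast (List.cons_ne_nil _ _), hlast]

lemma IsFlow.inSum_sub_outSum_target (hx : IsFlow A s t x) (hst : s ≠ t) :
    inSum A x t - outSum A x t = 1 := by
  have h : ∑ v, (outSum A x v - inSum A x v) = 0 := by
    simp [Finset.sum_sub_distrib, sum_outSum, sum_inSum]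
  rw [← Finset.sum_subset (Finset.subset_univ {s, t}) fun v _ hv => by
    simp only [Finset.mem_insert, Finset.mem_singleton, not_or] at hv
    rw [hx.2.2.1 v hv.1 hv.2, sub_self], Finset.sum_pair hst] at h
  linarith [hx.2.2.2]

lemma IsFlow.excess_eq (hx : IsFlow A s t x) {y : (V × V) → ℝ} (hy : IsFlow A s t y)
    (hst : s ≠ t) (v : V) : outSum A x v - inSum A x v = outSum A y v - inSum A y v := by
  by_cases hvs : v = s
  · rw [hvs, hx.2.2.2, hy.2.2.2]
  by_cases hvt : v = t
  · subst hvt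
    linarith [hx.inSum_sub_outSum_target hst, hy.inSum_sub_outSum_target hst]
  rw [hx.2.2.1 v hvs hvt, hy.2.2.1 v hvs hvt, sub_self, sub_self]

lemma IsFlow.eq_chi_of_one_le (hA : Acyclic A) (hst : s ≠ t) (hx : IsFlow A s t x)
    (hp : IsPath A s t p) (h1 : ∀ a ∈ pathEdges p, 1 ≤ x a) : x = chi p := by
  have hc : IsFlow A s t (chi p) := hp.chi_mem_flowPolytope hst
  have hzero := hA.eq_zero_of_circulation (x := (1 : ℝ) • x + (-1 : ℝ) • chi p)
    (fun a ha => by simp [hx.1 a ha, hc.1 a ha])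
    (fun a => by
      by_cases ha : a ∈ pathEdges p
      · simpa [chi, ha] using h1 a ha
      · simpa [chi, ha] using hx.2.1 a)
    (fun v => by
      rw [outSum_smul_add_smul, inSum_smul_add_smul]
      linarith [hx.excess_eq hc hst v])
  ext a
  have ha := congrFun hzero a
  simp only [Pi.add_apply, Pi.smul_apply, smul_eq_mul, Pi.zero_apply] at ha
  linarith

/-- Flow decomposition: peel off a path at its bottleneck value, which shrinks the support. -/
lemma IsFlow.mem_convexHull_chi (hA : Acyclic A) (hst : s ≠ t) (hx : IsFlow A s t x) :
    x ∈ convexHull ℝ (chi '' {p | IsPath A s t p}) := by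
  induction hn : (A.filter fun a => 0 < x a).card using Nat.strong_induction_on
    generalizing x with
  | _ n ih =>
  obtain ⟨p, hp, hpos⟩ := hx.exists_path_pos hA
  have hchi : chi p ∈ chi '' {p | IsPath A s t p} := ⟨p, hp, rfl⟩
  have hE : (pathEdges p).toFinset.Nonempty :=
    List.toFinset_nonempty_iff _ |>.mpr (hp.pathEdges_ne_nil hst)
  obtain ⟨b, hbE, hb⟩ := Finset.exists_mem_eq_inf' hE x
  set ε := (pathEdges p).toFinset.inf' hE x
  have hbp := List.mem_toFinset.mp hbE
  have hle : ∀ a ∈ pathEdges p, ε ≤ x a := fun a ha =>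
    Finset.inf'_le _ (List.mem_toFinset.mpr ha)
  rcases le_or_gt 1 ε with h1 | h1
  · rw [hx.eq_chi_of_one_le hA hst hp fun a ha => h1.trans (hle a ha)]
    exact subset_convexHull ℝ _ hchi
  have hε : 0 < ε := hb ▸ hpos b hbp
  set x' := (1 - ε)⁻¹ • (x - ε • chi p)
  have hsupp := support_sub_smul_chi_ssubset hp hε h1 hle hbp hb.symm
  have hx' := ih _ (hn ▸ Finset.card_lt_card hsupp) (hx.sub_smul_chi hst hp h1 hle) rfl
  have hdecomp : x = ε • chi p + (1 - ε) • x' := by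
    ext a
    simp only [x', Pi.add_apply, Pi.smul_apply, Pi.sub_apply, smul_eq_mul]
    field_simp [(sub_pos.mpr h1).ne']
    ring
  rw [hdecomp]
  exact convex_convexHull ℝ _ (subset_convexHull ℝ _ hchi) hx' hε.le (by linarith) (by ring)

lemma flowPolytope_eq_convexHull (hA : Acyclic A) (hst : s ≠ t) :
    flowPolytope A s t = convexHull ℝ (chi '' {p | IsPath A s t p}) :=
  subset_antisymm (fun _ hx => IsFlow.mem_convexHull_chi hA hst hx) <|
    convexHull_min (by rintro _ ⟨p, hp, rfl⟩; exact hp.chi_mem_flowPolytope hst)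
      convex_flowPolytope

end Decomposition

section ReducedNetwork

omit [Fintype V]

variable {A : Finset (V × V)} {s t : V} {p : List V}

def IsInternal (A : Finset (V × V)) (s t : V) (v : V) : Prop :=
  dminus A s t v = 1 ∧ dplus A s t v = 1

def IsReducedChain (A : Finset (V × V)) (s t : V) (l : List V) : Prop :=
  (l.IsChain fun u v => (u, v) ∈ redArcs A s t) ∧ ∀ x ∈ l.tail.dropLast, IsInternal A s t x

lemma dminus_source : dminus A s t s = 0 := by
  refine Finset.card_eq_zero.mpr (Finset.filter_eq_empty_iff.mpr fun a ha has => ?_)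
  obtain ⟨p, hp, hap⟩ := exists_path_of_mem_redArcs ha
  exact (hp.mem_tail_iff.mp (has ▸ snd_mem_tail_of_mem_pathEdges hap)).2 rfl

lemma dplus_target : dplus A s t t = 0 := by
  refine Finset.card_eq_zero.mpr (Finset.filter_eq_empty_iff.mpr fun a ha hat => ?_)
  obtain ⟨p, hp, hap⟩ := exists_path_of_mem_redArcs ha
  exact (hp.mem_dropLast_iff.mp (hat ▸ fst_mem_dropLast_of_mem_pathEdges hap)).2 rfl

lemma not_isInternal_source : ¬ IsInternal A s t s := fun h => by
  simp [IsInternal, dminus_source] at h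

lemma not_isInternal_target : ¬ IsInternal A s t t := fun h => by
  simp [IsInternal, dplus_target] at h

lemma one_le_dplus {v w : V} (h : (v, w) ∈ redArcs A s t) : 1 ≤ dplus A s t v :=
  Finset.card_pos.mpr ⟨(v, w), Finset.mem_filter.mpr ⟨h, rfl⟩⟩

lemma one_le_dminus {v w : V} (h : (v, w) ∈ redArcs A s t) : 1 ≤ dminus A s t w :=
  Finset.card_pos.mpr ⟨(v, w), Finset.mem_filter.mpr ⟨h, rfl⟩⟩

lemma exists_mem_redArcs_of_dplus_pos {v : V} (h : 0 < dplus A s t v) :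
    ∃ w, (v, w) ∈ redArcs A s t := by
  obtain ⟨⟨u, w⟩, ha⟩ := Finset.card_pos.mp h
  obtain ⟨hred, rfl⟩ := Finset.mem_filter.mp ha
  exact ⟨w, hred⟩

lemma exists_mem_redArcs_of_dminus_pos {v : V} (h : 0 < dminus A s t v) :
    ∃ u, (u, v) ∈ redArcs A s t := by
  obtain ⟨⟨u, w⟩, ha⟩ := Finset.card_pos.mp h
  obtain ⟨hred, rfl⟩ := Finset.mem_filter.mp ha
  exact ⟨u, hred⟩

lemma eq_of_dplus_eq_one {v w w' : V} (h : dplus A s t v = 1)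
    (hw : (v, w) ∈ redArcs A s t) (hw' : (v, w') ∈ redArcs A s t) : w = w' :=
  congrArg Prod.snd <| Finset.card_le_one.mp h.le _ (Finset.mem_filter.mpr ⟨hw, rfl⟩) _
    (Finset.mem_filter.mpr ⟨hw', rfl⟩)

lemma eq_of_dminus_eq_one {v u u' : V} (h : dminus A s t v = 1)
    (hu : (u, v) ∈ redArcs A s t) (hu' : (u', v) ∈ redArcs A s t) : u = u' :=
  congrArg Prod.fst <| Finset.card_le_one.mp h.le _ (Finset.mem_filter.mpr ⟨hu, rfl⟩) _
    (Finset.mem_filter.mpr ⟨hu', rfl⟩)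

lemma exists_ne_of_two_le_dplus {v : V} (h : 2 ≤ dplus A s t v) (w : V) :
    ∃ w', w' ≠ w ∧ (v, w') ∈ redArcs A s t := by
  obtain ⟨⟨v', w'⟩, ha, hne⟩ := Finset.exists_mem_ne (by omega : 1 < dplus A s t v) (v, w)
  obtain ⟨hred, rfl⟩ := Finset.mem_filter.mp ha
  exact ⟨w', fun h => hne (h ▸ rfl), hred⟩

lemma exists_ne_of_two_le_dminus {v : V} (h : 2 ≤ dminus A s t v) (u : V) :
    ∃ u', u' ≠ u ∧ (u', v) ∈ redArcs A s t := by
  obtain ⟨⟨u', v'⟩, ha, hne⟩ := Finset.exists_mem_ne (by omega : 1 < dminus A s t v) (u, v)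
  obtain ⟨hred, rfl⟩ := Finset.mem_filter.mp ha
  exact ⟨u', fun h => hne (h ▸ rfl), hred⟩

lemma IsPath.notMem_of_dplus_eq_one (hp : IsPath A s t p) {v w : V} (hd : dplus A s t v = 1)
    (hvw : (v, w) ∈ redArcs A s t) (hav : (v, w) ∉ pathEdges p) : v ∉ p := fun hv => by
  obtain ⟨w', hw'⟩ := hp.exists_succ hv fun h => by simp [h, dplus_target] at hd
  exact hav (eq_of_dplus_eq_one hd (hp.mem_redArcs hw') hvw ▸ hw')

lemma IsPath.notMem_of_dminus_eq_one (hp : IsPath A s t p) {u v : V} (hd : dminus A s t v = 1)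
    (huv : (u, v) ∈ redArcs A s t) (hav : (u, v) ∉ pathEdges p) : v ∉ p := fun hv => by
  obtain ⟨u', hu'⟩ := hp.exists_pred hv fun h => by simp [h, dminus_source] at hd
  exact hav (eq_of_dminus_eq_one hd (hp.mem_redArcs hu') huv ▸ hu')

lemma IsReducedChain.cons {l : List V} {h u : V}
    (hl : IsReducedChain A s t l)
    (hh : l.head? = some h) (hint : IsInternal A s t h) (hu : (u, h) ∈ redArcs A s t) :
    IsReducedChain A s t (u :: l) := by
  obtain ⟨r, rfl⟩ : ∃ r, l = h :: r := by
    cases l with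
    | nil => simp at hh
    | cons h' r => exact ⟨r, by simpa using hh⟩
  refine ⟨List.isChain_cons_cons.mpr ⟨hu, hl.1⟩, fun x hx => ?_⟩
  cases r with
  | nil => simp at hx
  | cons y r =>
    rw [List.tail_cons, List.dropLast_cons_of_ne_nil (List.cons_ne_nil _ _), List.mem_cons] at hx
    rcases hx with rfl | hx
    exacts [hint, hl.2 x hx]

lemma IsReducedChain.concat {l : List V} {z w : V}
    (hl : IsReducedChain A s t l)
    (hz : l.getLast? = some z) (hint : IsInternal A s t z) (hw : (z, w) ∈ redArcs A s t) :
    IsReducedChain A s t (l ++ [w]) := by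
  obtain ⟨r, rfl⟩ : ∃ r, l = r ++ [z] := by
    obtain ⟨r, y, hl⟩ := List.eq_nil_or_concat l |>.resolve_left (by rintro rfl; simp at hz)
    rw [hl, List.concat_eq_append, List.getLast?_concat, Option.some_inj] at hz
    exact ⟨r, by rw [hl, List.concat_eq_append, hz]⟩
  refine ⟨List.isChain_append.mpr ⟨hl.1, .singleton w, by simpa using hw⟩, fun x hx => ?_⟩
  cases r with
  | nil => simp at hx
  | cons y r =>
    rw [List.tail_append_of_ne_nil (by simp), List.dropLast_concat, List.cons_append,
      List.tail_cons, List.mem_append, List.mem_singleton] at hx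
    rcases hx with hx | rfl
    · exact hl.2 x (by simpa using hx)
    · exact hint

end ReducedNetwork

section Corridors

omit [Fintype V]

variable {A : Finset (V × V)} {s t : V} {p c : List V}

lemma IsCorridor.isInternal (hc : IsCorridor A s t c) {x : V} (hx : x ∈ c.tail.dropLast) :
    IsInternal A s t x :=
  hc.2.2.1 x hx

lemma IsCorridor.not_isInternal_head (hc : IsCorridor A s t c) {x : V} (hx : x ∈ c.head?) :
    ¬ IsInternal A s t x := by
  rw [IsInternal, not_and_or]; exact hc.2.2.2.1 x hx

lemma IsCorridor.not_isInternal_getLast (hc : IsCorridor A s t c) {x : V}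
    (hx : x ∈ c.getLast?) : ¬ IsInternal A s t x := by
  rw [IsInternal, not_and_or]; exact hc.2.2.2.2 x hx

lemma IsCorridor.mem_redArcs (hc : IsCorridor A s t c) {a : V × V} (ha : a ∈ pathEdges c) :
    a ∈ redArcs A s t :=
  hc.2.1.rel_of_mem_pathEdges ha

lemma IsCorridor.exists_eq_cons_cons (hc : IsCorridor A s t c) : ∃ h w r, c = h :: w :: r := by
  obtain ⟨hlen, -⟩ := hc
  match c, hlen with
  | h :: w :: r, _ => exact ⟨h, w, r, rfl⟩

lemma IsCorridor.exists_eq_append_pair (hc : IsCorridor A s t c) :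
    ∃ r u z, c = r ++ [u, z] := by
  obtain ⟨hlen, -⟩ := hc
  obtain ⟨r, u, z, h⟩ : ∃ r u z, c.reverse = z :: u :: r := by
    match h : c.reverse, (List.length_reverse (as := c)) ▸ hlen with
    | z :: u :: r, _ => exact ⟨r, u, z, rfl⟩
  exact ⟨r.reverse, u, z, by simpa using congrArg List.reverse h⟩

lemma IsCorridor.getLast?_eq_of_mem (hc : IsCorridor A s t c) {u v : V}
    (huv : (u, v) ∈ pathEdges c) (hv : ¬ IsInternal A s t v) : c.getLast? = some v := by
  obtain ⟨L, R, hsplit⟩ := mem_pathEdges_iff.mp huv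
  rw [hsplit, List.getLast?_append_cons_cons]
  cases R with
  | nil => rfl
  | cons x R =>
    exact absurd (hc.isInternal (hsplit ▸ List.mem_tail_dropLast_of_mem_dropLast (by simp))) hv

lemma IsCorridor.head?_eq_of_mem (hc : IsCorridor A s t c) {u v : V}
    (huv : (u, v) ∈ pathEdges c) (hu : ¬ IsInternal A s t u) : c.head? = some u := by
  obtain ⟨L, R, hsplit⟩ := mem_pathEdges_iff.mp huv
  rw [hsplit]
  cases L with
  | nil => rfl
  | cons x L =>
    refine absurd (hc.isInternal ?_) hu
    rw [hsplit, show x :: L ++ u :: v :: R = (x :: L ++ [u]) ++ v :: R by simp]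
    exact List.mem_tail_dropLast_of_mem_tail (by simp)

lemma IsCorridor.transGen_head_getLast (hc : IsCorridor A s t c) {h z : V}
    (hh : h ∈ c.head?) (hz : z ∈ c.getLast?) :
    Relation.TransGen (fun a b => (a, b) ∈ A) h z := by
  obtain ⟨h', w, r, rfl⟩ := hc.exists_eq_cons_cons
  obtain rfl : h' = h := by simpa using hh
  rw [List.getLast?_eq_some_getLast (by simp), Option.mem_some_iff] at hz
  exact hz ▸ Relation.TransGen.mono (fun _ _ hab => redArcs_subset hab) _ _
    hc.2.1.transGen_of_cons_cons

lemma IsCorridor.prefix_of_isChain (hc : IsCorridor A s t c) {L R : List V} {u v : V}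
    (hsplit : c = L ++ u :: v :: R) {Y : List V}
    (hY : (v :: Y).IsChain fun a b => (a, b) ∈ redArcs A s t)
    (hlast : ∀ z ∈ (v :: Y).getLast?, ¬ IsInternal A s t z) : R <+: Y :=
  List.IsChain.prefix_of_unique_succ (R := fun a b => (a, b) ∈ redArcs A s t)
    (P := IsInternal A s t)
    (fun _ _ _ hx => eq_of_dplus_eq_one hx.2)
    (hc.2.1.suffix (l₁ := v :: R) ⟨L ++ [u], by simp [hsplit]⟩)
    (fun _ hx => hc.isInternal (hsplit ▸ List.mem_tail_dropLast_of_mem_dropLast hx)) hY hlast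

lemma IsCorridor.suffix_of_isChain (hc : IsCorridor A s t c) {L R : List V} {u v : V}
    (hsplit : c = L ++ u :: v :: R) {X : List V}
    (hX : (X ++ [u]).IsChain fun a b => (a, b) ∈ redArcs A s t)
    (hhead : ∀ z ∈ (X ++ [u]).head?, ¬ IsInternal A s t z) : L <:+ X := by
  rw [← List.reverse_prefix]
  have hL : (L ++ [u]).IsChain fun a b => (a, b) ∈ redArcs A s t :=
    hc.2.1.prefix (l₁ := L ++ [u]) ⟨v :: R, by simp [hsplit]⟩
  refine List.IsChain.prefix_of_unique_succ (R := fun a b => (b, a) ∈ redArcs A s t)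
    (P := IsInternal A s t) (fun _ _ _ hx => eq_of_dminus_eq_one hx.1) (v := u) ?_
    (fun x hx => ?_) ?_ ?_
  · simpa using List.isChain_reverse.mpr hL
  · rw [show u :: L.reverse = (L ++ [u]).reverse by simp, List.dropLast_reverse,
      List.mem_reverse] at hx
    refine hc.isInternal (hsplit ▸ ?_)
    simpa using List.mem_tail_dropLast_of_mem_tail (R := R) (v := v) hx
  · simpa using List.isChain_reverse.mpr hX
  · simpa [← List.getLast?_reverse] using hhead

/-- From the shared arc the path is forced along `c` in both directions, since internal nodes
have a unique reduced successor and predecessor and a path cannot end at an internal node. -/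
lemma IsCorridor.infix_of_mem_pathEdges (hc : IsCorridor A s t c) (hp : IsPath A s t p)
    {a : V × V} (hac : a ∈ pathEdges c) (hap : a ∈ pathEdges p) : c <:+: p := by
  obtain ⟨L, R, hsplit⟩ := mem_pathEdges_iff.mp hac
  obtain ⟨X, Y, hpXY⟩ := mem_pathEdges_iff.mp hap
  have hchain := hp.isChain_redArcs
  rw [hpXY] at hchain
  obtain ⟨Y', rfl⟩ := hc.prefix_of_isChain hsplit
    (hchain.suffix (l₁ := a.2 :: Y) ⟨X ++ [a.1], by simp⟩)
    fun z hz => by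
      rw [← List.getLast?_append_cons_cons X, ← hpXY, hp.2.2.1, Option.mem_some_iff] at hz
      exact hz ▸ not_isInternal_target
  obtain ⟨X', rfl⟩ := hc.suffix_of_isChain hsplit
    (hchain.prefix (l₁ := X ++ [a.1]) ⟨a.2 :: (R ++ Y'), by simp⟩)
    fun z hz => by
      rw [List.head?_append_singleton X (a.2 :: (R ++ Y')), ← hpXY, hp.2.1,
        Option.mem_some_iff] at hz
      exact hz ▸ not_isInternal_source
  exact ⟨X', Y', by simp [hsplit, hpXY]⟩

lemma IsCorridor.eq_of_mem_pathEdges {c' : List V} (hc : IsCorridor A s t c)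
    (hc' : IsCorridor A s t c') {a : V × V} (ha : a ∈ pathEdges c) (ha' : a ∈ pathEdges c') :
    c = c' := by
  obtain ⟨L, R, hsplit⟩ := mem_pathEdges_iff.mp ha
  obtain ⟨L', R', hsplit'⟩ := mem_pathEdges_iff.mp ha'
  have forward {c c' L R L' R'} (hc : IsCorridor A s t c) (hc' : IsCorridor A s t c')
      (hsplit : c = L ++ a.1 :: a.2 :: R) (hsplit' : c' = L' ++ a.1 :: a.2 :: R') : R <+: R' :=
    hc.prefix_of_isChain hsplit (hc'.2.1.suffix (l₁ := a.2 :: R') ⟨L' ++ [a.1], by simp [hsplit']⟩)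
      fun z hz => hc'.not_isInternal_getLast (by rwa [hsplit', List.getLast?_append_cons_cons])
  have backward {c c' L R L' R'} (hc : IsCorridor A s t c) (hc' : IsCorridor A s t c')
      (hsplit : c = L ++ a.1 :: a.2 :: R) (hsplit' : c' = L' ++ a.1 :: a.2 :: R') : L <:+ L' :=
    hc.suffix_of_isChain hsplit (hc'.2.1.prefix (l₁ := L' ++ [a.1]) ⟨a.2 :: R', by simp [hsplit']⟩)
      fun z hz => hc'.not_isInternal_head (by rwa [hsplit', ← List.head?_append_singleton])
  have hR := (forward hc hc' hsplit hsplit').eq_of_length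
    ((forward hc hc' hsplit hsplit').length_le.antisymm (forward hc' hc hsplit' hsplit).length_le)
  have hL := (backward hc hc' hsplit hsplit').eq_of_length
    ((backward hc hc' hsplit hsplit').length_le.antisymm (backward hc' hc hsplit' hsplit).length_le)
  rw [hsplit, hsplit', hR, hL]

lemma IsCorridor.disjoint_of_notMem (hc : IsCorridor A s t c) (hp : IsPath A s t p)
    {a : V × V} (hac : a ∈ pathEdges c) (hap : a ∉ pathEdges p) :
    (pathEdges c).Disjoint (pathEdges p) :=
  fun _ hb hbp => hap ((hc.infix_of_mem_pathEdges hp hb hbp).pathEdges_subset a hac)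

lemma IsCorridor.disjoint_of_mem_succ (hc : IsCorridor A s t c) {h w : V} {r : List V}
    (hcs : c = h :: w :: r) (hp : IsPath A s t p) {y : V} (hy : (h, y) ∈ pathEdges p)
    (hyw : y ≠ w) : (pathEdges c).Disjoint (pathEdges p) :=
  hc.disjoint_of_notMem hp (a := (h, w)) (by simp [hcs]) fun hm =>
    hyw (hp.nodup.succ_unique hy hm)

lemma IsCorridor.disjoint_of_mem_pred (hc : IsCorridor A s t c) {u z : V} {r : List V}
    (hcs : c = r ++ [u, z]) (hp : IsPath A s t p) {y : V} (hy : (y, z) ∈ pathEdges p)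
    (hyu : y ≠ u) : (pathEdges c).Disjoint (pathEdges p) :=
  hc.disjoint_of_notMem hp (a := (u, z)) (mem_pathEdges_iff.mpr ⟨r, [], hcs⟩) fun hm =>
    hyu (hp.nodup.pred_unique hy hm)

lemma IsCorridor.exists_path_disjoint_of_prefix (hA : Acyclic A) (hc : IsCorridor A s t c)
    {h w : V} {r : List V} (hcs : c = h :: w :: r) (hd : 2 ≤ dplus A s t h)
    (hp : IsPath A s t p) {X M : List V} (hpXM : p = X ++ h :: M) :
    ∃ P, IsPath A s t P ∧ (∀ e ∈ pathEdges (X ++ [h]), e ∈ pathEdges P) ∧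
      (pathEdges c).Disjoint (pathEdges P) := by
  obtain ⟨y, hyw, hy⟩ := exists_ne_of_two_le_dplus hd w
  obtain ⟨q, hq, hqy⟩ := exists_path_of_mem_redArcs hy
  obtain ⟨q₁, q₂, hq₁₂⟩ := mem_pathEdges_iff.mp hqy
  have hP := hp.splice hA hq hpXM (q₁ := q₁ ++ [h]) (w := y) (q₂ := q₂)
    (by simp [hq₁₂]) (redArcs_subset hy)
  refine ⟨_, hP, fun e he => ?_,
    hc.disjoint_of_mem_succ hcs hP (mem_pathEdges_append_cons_cons _ _ _ _) hyw⟩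
  rw [pathEdges_append_cons]
  exact List.mem_append_left _ he

lemma IsCorridor.exists_path_disjoint_of_suffix (hA : Acyclic A) (hc : IsCorridor A s t c)
    {u z : V} {r : List V} (hcs : c = r ++ [u, z]) (hd : 2 ≤ dminus A s t z)
    (hp : IsPath A s t p) {M T : List V} (hpMT : p = M ++ z :: T) :
    ∃ P, IsPath A s t P ∧ (∀ e ∈ pathEdges (z :: T), e ∈ pathEdges P) ∧
      (pathEdges c).Disjoint (pathEdges P) := by
  obtain ⟨y, hyu, hy⟩ := exists_ne_of_two_le_dminus hd u
  obtain ⟨q, hq, hqy⟩ := exists_path_of_mem_redArcs hy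
  obtain ⟨q₁, q₂, hq₁₂⟩ := mem_pathEdges_iff.mp hqy
  have hP := hq.splice hA hp hq₁₂ hpMT (redArcs_subset hy)
  refine ⟨_, hP, fun e he => ?_,
    hc.disjoint_of_mem_pred hcs hP (mem_pathEdges_append_cons_cons _ _ _ _) hyu⟩
  rw [pathEdges_append_cons, pathEdges_cons_cons]
  exact List.mem_append_right _ (List.mem_cons_of_mem _ he)

lemma IsGoodCorridor.exists_path_disjoint (hA : Acyclic A) (hc : IsGoodCorridor A s t c) :
    ∃ p, IsPath A s t p ∧ (pathEdges c).Disjoint (pathEdges p) := by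
  obtain ⟨h, w, r, hcs⟩ := hc.1.exists_eq_cons_cons
  obtain ⟨p, hp, hpw⟩ := exists_path_of_mem_redArcs (hc.1.mem_redArcs (a := (h, w)) (by simp [hcs]))
  obtain ⟨X, Y, hpXY⟩ := mem_pathEdges_iff.mp hpw
  obtain ⟨P, hP, -, hcP⟩ :=
    hc.1.exists_path_disjoint_of_prefix hA hcs (hc.2.1 h (by simp [hcs])) hp hpXY
  exact ⟨P, hP, hcP⟩

/-- A path through an arc of `c` either avoids `c'` or runs through all of `c'` before or after
that arc; rerouting it at the head of `c'` along a second out-arc (or at the last node along a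
second in-arc) keeps the arc of `c` and avoids `c'`. -/
lemma IsGoodCorridor.exists_path_separating (hA : Acyclic A) {c' : List V}
    (hc : IsGoodCorridor A s t c) (hc' : IsGoodCorridor A s t c') (hne : c ≠ c') :
    ∃ p, IsPath A s t p ∧ ¬ (pathEdges c).Disjoint (pathEdges p) ∧
      (pathEdges c').Disjoint (pathEdges p) := by
  obtain ⟨h, w, r, hcs⟩ := hc.1.exists_eq_cons_cons
  have hhw : (h, w) ∈ pathEdges c := by simp [hcs]
  obtain ⟨p, hp, hphw⟩ := exists_path_of_mem_redArcs (hc.1.mem_redArcs hhw)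
  by_cases hd : (pathEdges c').Disjoint (pathEdges p)
  · exact ⟨p, hp, fun h => h hhw hphw, hd⟩
  obtain ⟨b, hbc', hbp⟩ : ∃ b ∈ pathEdges c', b ∈ pathEdges p := by
    simpa [List.Disjoint] using hd
  obtain ⟨X, T, hpXT⟩ := hc'.1.infix_of_mem_pathEdges hp hbc' hbp
  obtain ⟨h', w', r', hc's⟩ := hc'.1.exists_eq_cons_cons
  obtain ⟨r'', u', z', hc's'⟩ := hc'.1.exists_eq_append_pair
  have hc'ne : c' ≠ [] := by simp [hc's]
  have hedges := pathEdges_append_append (X := X) (T := T) hc'ne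
  rw [hpXT, show c'.head hc'ne = h' by simp [hc's],
    show c'.getLast hc'ne = z' by simp [hc's']] at hedges
  rw [hedges, List.mem_append, List.mem_append] at hphw
  rcases hphw with (hphw | hphw) | hphw
  · obtain ⟨P, hP, hXP, hc'P⟩ := hc'.1.exists_path_disjoint_of_prefix hA hc's
      (hc'.2.1 h' (by simp [hc's])) hp (X := X) (M := w' :: r' ++ T) (by simp [← hpXT, hc's])
    exact ⟨P, hP, fun h => h hhw (hXP _ hphw), hc'P⟩
  · exact absurd (hc.1.eq_of_mem_pathEdges hc'.1 hhw hphw) hne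
  · obtain ⟨P, hP, hTP, hc'P⟩ := hc'.1.exists_path_disjoint_of_suffix hA hc's'
      (hc'.2.2 z' (by simp [hc's'])) hp (M := X ++ r'' ++ [u']) (T := T)
      (by simp [← hpXT, hc's'])
    exact ⟨P, hP, fun h => h hhw (hTP _ hphw), hc'P⟩

end Corridors

section GoodCorridors

variable {A : Finset (V × V)} {s t : V} {p c : List V}

/-- A longest chain of reduced arcs through `a` with internal interior nodes is a corridor:
an internal end node could be passed to extend it. -/
lemma exists_isCorridor_mem (hA : Acyclic A) {a : V × V} (ha : a ∈ redArcs A s t) :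
    ∃ c, IsCorridor A s t c ∧ a ∈ pathEdges c := by
  set S := {l : List V | IsReducedChain A s t l ∧ a ∈ pathEdges l}
  have hfin : S.Finite :=
    List.finite_setOf_nodup.subset fun l hl => hA.nodup_of_isChain_redArcs hl.1.1
  obtain ⟨c, ⟨hchain, hac⟩, hmax⟩ :=
    Set.exists_max_image S List.length hfin ⟨[a.1, a.2], by simpa [S, IsReducedChain] using ha⟩
  have hlen : 2 ≤ c.length := by
    obtain ⟨L, R, rfl⟩ := mem_pathEdges_iff.mp hac
    simp only [List.length_append, List.length_cons]
    omega
  refine ⟨c, ⟨hlen, hchain.1, hchain.2, fun h hh => ?_, fun z hz => ?_⟩, hac⟩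
  · rw [← not_and_or]
    intro hint
    obtain ⟨u, hu⟩ := exists_mem_redArcs_of_dminus_pos (v := h) (by rw [hint.1]; norm_num)
    simpa using hmax _ ⟨hchain.cons hh hint hu,
      List.IsInfix.pathEdges_subset ⟨[u], [], by simp⟩ a hac⟩
  · rw [← not_and_or]
    intro hint
    obtain ⟨w, hw⟩ := exists_mem_redArcs_of_dplus_pos (v := z) (by rw [hint.2]; norm_num)
    simpa using hmax _ ⟨hchain.concat hz hint hw,
      List.IsInfix.pathEdges_subset ⟨[], [w], by simp⟩ a hac⟩

/-- Among the corridors avoided by a family `Q` of paths, one with earliest head starts with two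
reduced out-arcs: if its head had only one, that node would lie on no path of `Q`, so the
corridor through any arc into it would be avoided by `Q` and start earlier. -/
lemma exists_corridor_disjoint_two_le_dplus (hA : Acyclic A) {Q : Set (List V)}
    (hQ : ∀ q ∈ Q, IsPath A s t q) {p : List V} (hp : p ∈ Q) (hc : IsCorridor A s t c)
    (hcQ : ∀ q ∈ Q, (pathEdges c).Disjoint (pathEdges q)) :
    ∃ c, IsCorridor A s t c ∧ (∀ q ∈ Q, (pathEdges c).Disjoint (pathEdges q)) ∧
      ∀ h ∈ c.head?, 2 ≤ dplus A s t h := by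
  obtain ⟨h₀, w₀, r₀, hc₀⟩ := hc.exists_eq_cons_cons
  obtain ⟨h, ⟨c, hc, hcQ, hh⟩, hmin⟩ := hA.wellFounded.has_min
    {h | ∃ c, IsCorridor A s t c ∧ (∀ q ∈ Q, (pathEdges c).Disjoint (pathEdges q)) ∧
      h ∈ c.head?} ⟨h₀, c, hc, hcQ, by simp [hc₀]⟩
  refine ⟨c, hc, hcQ, fun h' hh' => ?_⟩
  rw [Option.mem_unique hh' hh]
  by_contra hlt
  obtain ⟨h', w, r, rfl⟩ := hc.exists_eq_cons_cons
  have hhead : h' = h := by simpa using hh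
  subst h'
  have hhw : (h, w) ∈ pathEdges (h :: w :: r) := by simp
  have hw := hc.mem_redArcs hhw
  have hd : dplus A s t h = 1 := by have := one_le_dplus hw; omega
  have hnot : ∀ q ∈ Q, h ∉ q := fun q hq =>
    (hQ q hq).notMem_of_dplus_eq_one hd hw fun hm => hcQ q hq hhw hm
  obtain ⟨q, hq, hqw⟩ := exists_path_of_mem_redArcs hw
  obtain ⟨u, hu⟩ := hq.exists_pred (v := h) (fst_mem_of_mem_pathEdges hqw)
    fun e => hnot p hp (e ▸ (hQ p hp).source_mem)
  obtain ⟨c', hc', hc'u⟩ := exists_isCorridor_mem hA (hq.mem_redArcs hu)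
  have hlast := hc'.getLast?_eq_of_mem hc'u (hc.not_isInternal_head (by simp))
  obtain ⟨h', w', r', hc's⟩ := hc'.exists_eq_cons_cons
  have hh' : h' ∈ c'.head? := by simp [hc's]
  exact hmin h' ⟨c', hc', fun q hq => hc'.disjoint_of_notMem (hQ q hq) hc'u
    fun hm => hnot q hq (snd_mem_of_mem_pathEdges hm), hh'⟩
    (hc'.transGen_head_getLast hh' hlast)

/-- Among the corridors avoided by `Q` whose head has two reduced out-arcs, one with latest
last node is good, by the mirror image of the previous argument. -/
lemma exists_goodCorridor_disjoint_of_two_le_dplus (hA : Acyclic A) {Q : Set (List V)}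
    (hQ : ∀ q ∈ Q, IsPath A s t q) {p : List V} (hp : p ∈ Q) (hc : IsCorridor A s t c)
    (hcQ : ∀ q ∈ Q, (pathEdges c).Disjoint (pathEdges q))
    (hch : ∀ h ∈ c.head?, 2 ≤ dplus A s t h) :
    ∃ c, IsGoodCorridor A s t c ∧ ∀ q ∈ Q, (pathEdges c).Disjoint (pathEdges q) := by
  obtain ⟨r₀, u₀, z₀, hc₀⟩ := hc.exists_eq_append_pair
  obtain ⟨z, ⟨c, hc, hcQ, hch, hz⟩, hmax⟩ := hA.wellFounded_swap.has_min
    {z | ∃ c, IsCorridor A s t c ∧ (∀ q ∈ Q, (pathEdges c).Disjoint (pathEdges q)) ∧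
      (∀ h ∈ c.head?, 2 ≤ dplus A s t h) ∧ z ∈ c.getLast?} ⟨z₀, c, hc, hcQ, hch, by simp [hc₀]⟩
  refine ⟨c, ⟨hc, hch, fun z' hz' => ?_⟩, hcQ⟩
  rw [Option.mem_unique hz' hz]
  by_contra hlt
  obtain ⟨r, u, z', rfl⟩ := hc.exists_eq_append_pair
  have hlast : z' = z := by simpa using hz
  subst z'
  have huz : (u, z) ∈ pathEdges (r ++ [u, z]) := mem_pathEdges_iff.mpr ⟨r, [], rfl⟩
  have hu := hc.mem_redArcs huz
  have hd : dminus A s t z = 1 := by have := one_le_dminus hu; omega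
  have hnot : ∀ q ∈ Q, z ∉ q := fun q hq =>
    (hQ q hq).notMem_of_dminus_eq_one hd hu fun hm => hcQ q hq huz hm
  obtain ⟨q, hq, hqu⟩ := exists_path_of_mem_redArcs hu
  obtain ⟨w, hw⟩ := hq.exists_succ (v := z) (snd_mem_of_mem_pathEdges hqu)
    fun e => hnot p hp (e ▸ (hQ p hp).target_mem)
  have hzint := hc.not_isInternal_getLast hz
  have hdz : 2 ≤ dplus A s t z := by
    have := one_le_dplus (hq.mem_redArcs hw)
    have : dplus A s t z ≠ 1 := fun h => hzint ⟨hd, h⟩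
    omega
  obtain ⟨c', hc', hc'w⟩ := exists_isCorridor_mem hA (hq.mem_redArcs hw)
  have hhead := hc'.head?_eq_of_mem hc'w hzint
  obtain ⟨r', u', z', hc's⟩ := hc'.exists_eq_append_pair
  have hz' : z' ∈ c'.getLast? := by simp [hc's]
  exact hmax z' ⟨c', hc', fun q hq => hc'.disjoint_of_notMem (hQ q hq) hc'w
    (fun hm => hnot q hq (fst_mem_of_mem_pathEdges hm)),
    fun h hh => by rw [hhead, Option.mem_some_iff] at hh; exact hh ▸ hdz, hz'⟩
    (hc'.transGen_head_getLast (by rw [hhead]; rfl) hz')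

lemma exists_goodCorridor_disjoint (hA : Acyclic A) {Q : Set (List V)}
    (hQ : ∀ q ∈ Q, IsPath A s t q) {p : List V} (hp : p ∈ Q) {a : V × V}
    (ha : a ∈ redArcs A s t) (haQ : ∀ q ∈ Q, a ∉ pathEdges q) :
    ∃ c, IsGoodCorridor A s t c ∧ ∀ q ∈ Q, (pathEdges c).Disjoint (pathEdges q) := by
  obtain ⟨c, hc, hac⟩ := exists_isCorridor_mem hA ha
  obtain ⟨c, hc, hcQ, hch⟩ := exists_corridor_disjoint_two_le_dplus hA hQ hp hc
    fun q hq => hc.disjoint_of_notMem (hQ q hq) hac (haQ q hq)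
  exact exists_goodCorridor_disjoint_of_two_le_dplus hA hQ hp hc hcQ hch

lemma exists_goodCorridor (hA : Acyclic A) {q : List V} (hp : IsPath A s t p)
    (hq : IsPath A s t q) (hpq : p ≠ q) : ∃ c, IsGoodCorridor A s t c := by
  obtain ⟨a, haq, hap⟩ : ∃ a ∈ pathEdges q, a ∉ pathEdges p := by
    by_contra! h
    exact hpq (hp.eq_of_pathEdges_subset hq h).symm
  obtain ⟨c, hc, -⟩ := exists_goodCorridor_disjoint hA (Q := {p}) (by simp [hp]) rfl
    (hq.mem_redArcs haq) (by simp [hap])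
  exact ⟨c, hc⟩

end GoodCorridors

section CorridorFaces

omit [Fintype V]

variable {A : Finset (V × V)} {s t : V} {p c : List V}

def corridorFace (A : Finset (V × V)) (s t : V) (c : List V) : Set ((V × V) → ℝ) :=
  {x ∈ flowPolytope A s t | ∀ b ∈ pathEdges c, x b = 0}

lemma isExposed_corridorFace : IsExposed ℝ (flowPolytope A s t) (corridorFace A s t c) := by
  convert isExposed_setOf_forall_eq_zero (S := flowPolytope A s t) (fun x hx => hx.2.1)
    (pathEdges c).toFinset using 1
  simp [corridorFace]

lemma IsPath.chi_mem_corridorFace (hp : IsPath A s t p) (hst : s ≠ t)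
    (hcp : (pathEdges c).Disjoint (pathEdges p)) : chi p ∈ corridorFace A s t c :=
  ⟨hp.chi_mem_flowPolytope hst, fun _ hb => if_neg (hcp hb)⟩

lemma chi_notMem_corridorFace (hcp : ¬ (pathEdges c).Disjoint (pathEdges p)) :
    chi p ∉ corridorFace A s t c := fun h => by
  obtain ⟨b, hbc, hbp⟩ : ∃ b ∈ pathEdges c, b ∈ pathEdges p := by
    simpa [List.Disjoint] using hcp
  simpa [chi, hbp] using h.2 b hbc

lemma IsCorridor.corridorFace_ne (hc : IsCorridor A s t c) (hst : s ≠ t) :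
    corridorFace A s t c ≠ flowPolytope A s t := fun he => by
  obtain ⟨h, w, r, hcs⟩ := hc.exists_eq_cons_cons
  have hhw : (h, w) ∈ pathEdges c := by simp [hcs]
  obtain ⟨p, hp, hphw⟩ := exists_path_of_mem_redArcs (hc.mem_redArcs hhw)
  exact chi_notMem_corridorFace (fun hd => hd hhw hphw) (he ▸ hp.chi_mem_flowPolytope hst)

lemma IsGoodCorridor.corridorFace_nonempty (hA : Acyclic A) (hst : s ≠ t)
    (hc : IsGoodCorridor A s t c) : (corridorFace A s t c).Nonempty :=
  let ⟨_, hp, hcp⟩ := hc.exists_path_disjoint hA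
  ⟨_, hp.chi_mem_corridorFace hst hcp⟩

lemma IsGoodCorridor.eq_of_corridorFace_subset (hA : Acyclic A) (hst : s ≠ t) {c' : List V}
    (hc : IsGoodCorridor A s t c) (hc' : IsGoodCorridor A s t c')
    (hsub : corridorFace A s t c ⊆ corridorFace A s t c') : c = c' := by
  by_contra hne
  obtain ⟨p, hp, hc'p, hcp⟩ := hc'.exists_path_separating hA hc (Ne.symm hne)
  exact chi_notMem_corridorFace hc'p (hsub (hp.chi_mem_corridorFace hst hcp))

end CorridorFaces

section Facets

variable {A : Finset (V × V)} {s t : V} {p c : List V}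

/-- A proper exposed face misses some reduced arc on all of its vertices: otherwise it would
contain a point positive on every reduced arc, which could be pushed beyond the face inside the
polytope, away from a vertex outside the face. -/
lemma IsExposed.exists_redArcs_forall_notMem (hA : Acyclic A) (hst : s ≠ t)
    {G : Set ((V × V) → ℝ)} (hG : IsExposed ℝ (flowPolytope A s t) G) (hGne : G.Nonempty)
    (hGS : G ≠ flowPolytope A s t) :
    ∃ a ∈ redArcs A s t, ∀ q, IsPath A s t q → chi q ∈ G → a ∉ pathEdges q := by
  have hconv : Convex ℝ G := hG.convex convex_flowPolytope
  obtain ⟨p, hp, hpG⟩ : ∃ p, IsPath A s t p ∧ chi p ∉ G := by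
    by_contra! hall
    refine hGS (hG.subset.antisymm ?_)
    rw [flowPolytope_eq_convexHull hA hst]
    exact convexHull_min (by rintro _ ⟨q, hq, rfl⟩; exact hall q hq) hconv
  by_contra! hcover
  obtain ⟨y, hyG, hypos⟩ := hconv.exists_forall_pos (fun y hy => (hG.subset hy).2.1) hGne
    (redArcs A s t) fun a ha => by
      obtain ⟨q, hq, hqG, haq⟩ := hcover a ha
      exact ⟨chi q, hqG, by simp [chi, haq]⟩
  have hE : (pathEdges p).toFinset.Nonempty :=
    List.toFinset_nonempty_iff _ |>.mpr (hp.pathEdges_ne_nil hst)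
  obtain ⟨b, hbE, hb⟩ := Finset.exists_mem_eq_inf' hE y
  have hε : 0 < (pathEdges p).toFinset.inf' hE y :=
    hb ▸ hypos b (hp.mem_redArcs (List.mem_toFinset.mp hbE))
  exact hG.add_smul_sub_notMem hyG (hp.chi_mem_flowPolytope hst) hpG hε
    ((hG.subset hyG).add_smul_sub_chi hst hp hε.le fun a ha =>
      Finset.inf'_le _ (List.mem_toFinset.mpr ha))

omit [DecidableEq V] in
lemma finite_setOf_isPath : {p : List V | IsPath A s t p}.Finite :=
  List.finite_setOf_nodup.subset fun _ hp => hp.nodup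

lemma IsExposed.exists_goodCorridor_subset (hA : Acyclic A) (hst : s ≠ t)
    {G : Set ((V × V) → ℝ)} (hG : IsExposed ℝ (flowPolytope A s t) G) (hGne : G.Nonempty)
    (hGS : G ≠ flowPolytope A s t) :
    ∃ c, IsGoodCorridor A s t c ∧ G ⊆ corridorFace A s t c := by
  set X := (finite_setOf_isPath (A := A) (s := s) (t := t)).toFinset.image chi
  have hXS : convexHull ℝ (X : Set ((V × V) → ℝ)) = flowPolytope A s t := by
    rw [flowPolytope_eq_convexHull hA hst]
    simp [X]
  have hGX : G ⊆ convexHull ℝ (↑X ∩ G) := (hXS ▸ hG).subset_convexHull_inter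
  have hX : ∀ y ∈ (X : Set ((V × V) → ℝ)), ∃ q, IsPath A s t q ∧ chi q = y := by simp [X]
  obtain ⟨p, hp, hpG⟩ : ∃ p, IsPath A s t p ∧ chi p ∈ G := by
    obtain ⟨x, hx⟩ := hGne
    obtain ⟨_, hyX, hyG⟩ := convexHull_nonempty_iff.mp ⟨x, hGX hx⟩
    obtain ⟨p, hp, rfl⟩ := hX _ hyX
    exact ⟨p, hp, hyG⟩
  obtain ⟨a, ha, haQ⟩ := hG.exists_redArcs_forall_notMem hA hst ⟨_, hpG⟩ hGS
  obtain ⟨c, hc, hcQ⟩ := exists_goodCorridor_disjoint hA (Q := {q | IsPath A s t q ∧ chi q ∈ G})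
    (fun q hq => hq.1) ⟨hp, hpG⟩ ha fun q hq => haQ q hq.1 hq.2
  have hzero : convexHull ℝ (↑X ∩ G) ⊆ {z | ∀ b ∈ pathEdges c, z b = 0} := by
    refine convexHull_min (fun y ⟨hyX, hyG⟩ b hb => ?_)
      fun z hz z' hz' _ _ _ _ _ b hb => by simp [hz b hb, hz' b hb]
    obtain ⟨q, hq, rfl⟩ := hX y hyX
    exact if_neg (hcQ q ⟨hq, hyG⟩ hb)
  exact ⟨c, hc, fun x hx => ⟨hG.subset hx, hzero (hGX hx)⟩⟩

lemma IsGoodCorridor.isFacetOf_corridorFace (hA : Acyclic A) (hst : s ≠ t)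
    (hc : IsGoodCorridor A s t c) : IsFacetOf (flowPolytope A s t) (corridorFace A s t c) := by
  refine ⟨isExposed_corridorFace, hc.1.corridorFace_ne hst, fun G hG hGS hsub => ?_⟩
  obtain ⟨c', hc', hGc'⟩ := hG.exists_goodCorridor_subset hA hst
    ((hc.corridorFace_nonempty hA hst).mono hsub) hGS
  obtain rfl := hc.eq_of_corridorFace_subset hA hst hc' (hsub.trans hGc')
  exact hGc'.antisymm hsub

lemma IsFacetOf.exists_eq_corridorFace (hA : Acyclic A) (hst : s ≠ t) {q : List V}
    (hp : IsPath A s t p) (hq : IsPath A s t q) (hpq : p ≠ q) {F : Set ((V × V) → ℝ)}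
    (hF : IsFacetOf (flowPolytope A s t) F) :
    ∃ c, IsGoodCorridor A s t c ∧ F = corridorFace A s t c := by
  obtain ⟨hFexp, hFS, hFmax⟩ := hF
  rcases F.eq_empty_or_nonempty with rfl | hFne
  · obtain ⟨c, hc⟩ := exists_goodCorridor hA hp hq hpq
    exact absurd (hFmax _ isExposed_corridorFace (hc.1.corridorFace_ne hst) (Set.empty_subset _))
      (hc.corridorFace_nonempty hA hst).ne_empty
  · obtain ⟨c, hc, hFc⟩ := hFexp.exists_goodCorridor_subset hA hst hFne hFS
    exact ⟨c, hc, (hFmax _ isExposed_corridorFace (hc.1.corridorFace_ne hst) hFc).symm⟩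

end Facets

/-- The number of facets of the flow polytope of an acyclic network with more than one
`s`–`t` path equals the number of good corridors. -/
theorem stmt15 (A : Finset (V × V)) (s t : V) (hA : Acyclic A)
    (h2 : ∃ p q : List V, IsPath A s t p ∧ IsPath A s t q ∧ p ≠ q) :
    {F : Set ((V × V) → ℝ) | IsFacetOf (flowPolytope A s t) F}.ncard
      = {c : List V | IsGoodCorridor A s t c}.ncard := by
  obtain ⟨p, q, hp, hq, hpq⟩ := h2
  have hst : s ≠ t := by
    rintro rfl
    exact hpq (hp.eq_singleton_of_target_eq_source.trans hq.eq_singleton_of_target_eq_source.symm)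
  have hfacets : {F | IsFacetOf (flowPolytope A s t) F}
      = corridorFace A s t '' {c | IsGoodCorridor A s t c} := by
    ext F
    refine ⟨fun hF => ?_, ?_⟩
    · obtain ⟨c, hc, rfl⟩ := hF.exists_eq_corridorFace hA hst hp hq hpq
      exact ⟨c, hc, rfl⟩
    · rintro ⟨c, hc, rfl⟩
      exact hc.isFacetOf_corridorFace hA hst
  rw [hfacets]
  exact Set.InjOn.ncard_image fun c hc c' hc' he => hc.eq_of_corridorFace_subset hA hst hc' he.le
end

section
/- For two linear orderings L and L' of a finite set C, the following are equivalent: (A) there exist alternatives i, j, k with i >_L k, j >_L k, i >_{L'} k, j >_{L'} k, i ≠ j, L⁻(k) ≠ L'⁻(k), and L⁻(i) = L'⁻(j); (B) there exists a nonempty proper subset U of C that is a beginning set of both L and L' such that L and L' coincide neither on U nor on C \ U. -/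
/-!
A beginning set of the restriction of `L` to `S` at `k ∈ S` is `L⁻(k) ∩ S`. If two orderings
`m ≠ m'` of the same set are compared from the bottom, either their last elements `i ≠ j`
differ, and then `m⁻(i) = m'⁻(j)` is the whole set, or they agree and can be removed; so there
are `i ≠ j` with `m⁻(i) = m'⁻(j)`, and since `m'⁻` is injective also some `k` with
`m⁻(k) ≠ m'⁻(k)`. Applied to the restrictions to `U` and to `C \ U` this gives (B) ⇒ (A).
For (A) ⇒ (B), `U = L⁻(i)` works: `i ≠ j` separates the restrictions to `U`, and the beginning
sets at `k ∉ U` those to `C \ U`, as both contain `U`.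
-/

/-- A linear ordering of `α`, encoded as the list of all elements in decreasing order. -/
def IsLinOrd {α : Type*} (l : List α) : Prop := l.Nodup ∧ ∀ a : α, a ∈ l

/-- The beginning set `L⁻(i) = {j : j ≥_L i}` of the linear ordering given by list `l`. -/
def Lminus {α : Type*} [DecidableEq α] (l : List α) (i : α) : Finset α :=
  insert i (l.takeWhile (fun a => a ≠ i)).toFinset

/-- `i >_L k` for the linear ordering given by list `l` (earlier in the list = greater). -/
def gtL {α : Type*} [DecidableEq α] (l : List α) (i k : α) : Prop :=
  l.idxOf i < l.idxOf k

section

variable {α : Type*} [DecidableEq α]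

theorem takeWhile_ne_eq_take_idxOf (l : List α) (i : α) :
    l.takeWhile (fun a => a ≠ i) = l.take (l.idxOf i) := by
  rw [List.takeWhile_eq_take_findIdx_not]
  simp only [ne_eq, decide_not, Bool.not_not]
  rfl

theorem mem_Lminus {l : List α} {i x : α} (hi : i ∈ l) :
    x ∈ Lminus l i ↔ l.idxOf x ≤ l.idxOf i := by
  have hil := List.idxOf_lt_length_iff.2 hi
  by_cases hx : x ∈ l
  · rw [Lminus, takeWhile_ne_eq_take_idxOf, Finset.mem_insert, List.mem_toFinset,
      List.mem_take_iff_idxOf_lt hx, le_iff_lt_or_eq, or_comm, List.idxOf_inj hx]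
  · have hxl : l.idxOf x = l.length := List.idxOf_eq_length_iff.2 hx
    simp only [Lminus, Finset.mem_insert, List.mem_toFinset, hxl]
    constructor
    · rintro (rfl | h)
      · exact absurd hi hx
      · exact absurd ((List.takeWhile_sublist _).subset h) hx
    · omega

theorem Lminus_inj {l : List α} {i j : α} (hi : i ∈ l) (hj : j ∈ l) :
    Lminus l i = Lminus l j ↔ i = j := by
  refine ⟨fun h => ?_, congrArg _⟩
  have hij := (mem_Lminus hj).1 (h ▸ (mem_Lminus hi).2 le_rfl)
  have hji := (mem_Lminus hi).1 (h ▸ (mem_Lminus hj).2 le_rfl)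
  exact (List.idxOf_inj hi).1 (le_antisymm hij hji)

theorem Lminus_subset_Lminus {l : List α} {i k : α} (hk : k ∈ l) (hi : i ∈ Lminus l k) :
    Lminus l i ⊆ Lminus l k := by
  have hik := (mem_Lminus hk).1 hi
  have hil : i ∈ l := List.idxOf_lt_length_iff.1 (hik.trans_lt (List.idxOf_lt_length_iff.2 hk))
  intro x hx
  exact (mem_Lminus hk).2 (((mem_Lminus hil).1 hx).trans hik)

theorem Lminus_filter (p : α → Bool) {k : α} (hk : p k) (l : List α) :
    Lminus (l.filter p) k = (Lminus l k).filter (fun a => p a) := by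
  have hpred : (fun a => !p a || decide (a ≠ k)) = fun a => decide (a ≠ k) := by
    funext a
    by_cases hak : a = k <;> simp [hak, hk]
  rw [Lminus, Lminus, List.takeWhile_filter, hpred, Finset.filter_insert, if_pos hk,
    List.toFinset_filter]

theorem Lminus_filter_mem (l : List α) {U : Finset α} {i : α} (hi : i ∈ U) :
    Lminus (l.filter (· ∈ U)) i = Lminus l i ∩ U := by
  rw [Lminus_filter _ (by simpa using hi), ← Finset.filter_mem_eq_inter]
  simp

theorem Lminus_filter_notMem (l : List α) {U : Finset α} {k : α} (hk : k ∉ U) :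
    Lminus (l.filter (· ∉ U)) k = Lminus l k \ U := by
  rw [Lminus_filter _ (by simpa using hk), ← Finset.filter_notMem_eq_sdiff]
  simp

theorem Lminus_append_of_mem {l₁ : List α} (l₂ : List α) {i : α} (hi : i ∈ l₁) :
    Lminus (l₁ ++ l₂) i = Lminus l₁ i := by
  rw [Lminus, Lminus, takeWhile_ne_eq_take_idxOf, takeWhile_ne_eq_take_idxOf,
    List.idxOf_append_of_mem hi,
    List.take_append_of_le_length (List.idxOf_lt_length_iff.2 hi).le]

theorem Lminus_concat_self {l : List α} {i : α} (hi : i ∉ l) :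
    Lminus (l ++ [i]) i = (l ++ [i]).toFinset := by
  rw [Lminus,
    List.takeWhile_append_of_pos fun a ha => by simpa using ne_of_mem_of_not_mem ha hi]
  ext x
  simp

theorem exists_ne_Lminus_eq {m m' : List α} (hm : m.Nodup) (hm' : m'.Nodup)
    (hset : m.toFinset = m'.toFinset) (hne : m ≠ m') :
    ∃ i ∈ m, ∃ j ∈ m', i ≠ j ∧ Lminus m i = Lminus m' j := by
  induction m using List.reverseRecOn generalizing m' with
  | nil =>
    exact absurd (List.toFinset_eq_empty_iff _ |>.1 hset.symm).symm hne
  | append_singleton m₀ i ih =>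
    obtain rfl | ⟨m₀', j, rfl⟩ := List.eq_nil_or_concat' m'
    · simp at hset
    obtain ⟨hi, hm₀⟩ : i ∉ m₀ ∧ m₀.Nodup := by
      simpa [List.nodup_append_comm (l₁ := m₀)] using hm
    obtain ⟨hj, hm₀'⟩ : j ∉ m₀' ∧ m₀'.Nodup := by
      simpa [List.nodup_append_comm (l₁ := m₀')] using hm'
    by_cases hij : i = j
    · subst hij
      have hset₀ : m₀.toFinset = m₀'.toFinset := by
        have h := congrArg (Finset.erase · i) hset
        simpa [Finset.erase_insert, hi, hj] using h
      obtain ⟨i', hi', j', hj', hne', hL⟩ := ih hm₀ hm₀' hset₀ (fun h => hne (h ▸ rfl))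
      exact ⟨i', by simp [hi'], j', by simp [hj'], hne',
        by rw [Lminus_append_of_mem _ hi', Lminus_append_of_mem _ hj', hL]⟩
    · refine ⟨i, by simp, j, by simp, hij, ?_⟩
      rw [Lminus_concat_self hi, Lminus_concat_self hj, hset]

theorem exists_Lminus_ne {m m' : List α} (hm : m.Nodup) (hm' : m'.Nodup)
    (hset : m.toFinset = m'.toFinset) (hne : m ≠ m') :
    ∃ k ∈ m, Lminus m k ≠ Lminus m' k := by
  obtain ⟨i, hi, j, hj, hij, hL⟩ := exists_ne_Lminus_eq hm hm' hset hne
  refine ⟨i, hi, fun h => hij ((Lminus_inj ?_ hj).1 (h ▸ hL))⟩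
  rw [← List.mem_toFinset, ← hset, List.mem_toFinset]
  exact hi

theorem toFinset_filter_eq_of_isLinOrd {l l' : List α} (hl : IsLinOrd l) (hl' : IsLinOrd l')
    (p : α → Bool) : (l.filter p).toFinset = (l'.filter p).toFinset := by
  ext x
  simp [hl.2 x, hl'.2 x]

theorem filter_mem_Lminus_ne {l l' : List α} (hl : IsLinOrd l) (hl' : IsLinOrd l') {i j : α}
    (hij : i ≠ j) (h : Lminus l i = Lminus l' j) :
    l.filter (· ∈ Lminus l i) ≠ l'.filter (· ∈ Lminus l i) := by
  intro hfilter
  have hjU : j ∈ Lminus l i := h ▸ (mem_Lminus (hl'.2 j)).2 le_rfl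
  have hL := congrArg (Lminus · j) hfilter
  simp only [Lminus_filter_mem _ hjU] at hL
  rw [Finset.inter_eq_left.2 (Lminus_subset_Lminus (hl.2 i) hjU),
    h, Finset.inter_self, ← h] at hL
  exact hij ((Lminus_inj (hl.2 i) (hl.2 j)).1 hL.symm)

theorem filter_notMem_ne {l l' : List α} {U : Finset α} {k : α} (hk : k ∉ U)
    (hU : U ⊆ Lminus l k) (hU' : U ⊆ Lminus l' k) (hne : Lminus l k ≠ Lminus l' k) :
    l.filter (· ∉ U) ≠ l'.filter (· ∉ U) := by
  intro hfilter
  have hL := congrArg (Lminus · k) hfilter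
  simp only [Lminus_filter_notMem _ hk] at hL
  rw [← Finset.union_sdiff_of_subset hU, ← Finset.union_sdiff_of_subset hU', hL] at hne
  exact hne rfl

theorem gtL_of_mem_Lminus_of_notMem {l : List α} {i₀ x y : α} (hi₀ : i₀ ∈ l)
    (hx : x ∈ Lminus l i₀) (hy : y ∉ Lminus l i₀) : gtL l x y :=
  ((mem_Lminus hi₀).1 hx).trans_lt (not_le.1 (mt (mem_Lminus hi₀).2 hy))

end

/-- Turansick's condition (2) on two linear orderings is equivalent to the existence of a
nonempty proper common beginning set on which, and on whose complement, the orderings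
differ. -/
theorem stmt19 {α : Type*} [Fintype α] [DecidableEq α]
    (l l' : List α) (hl : IsLinOrd l) (hl' : IsLinOrd l') :
    (∃ i j k : α, gtL l i k ∧ gtL l j k ∧ gtL l' i k ∧ gtL l' j k ∧ i ≠ j ∧
        Lminus l k ≠ Lminus l' k ∧ Lminus l i = Lminus l' j) ↔
      (∃ U : Finset α, U ≠ ∅ ∧ U ≠ Finset.univ ∧
        (∃ i, U = Lminus l i) ∧ (∃ j, U = Lminus l' j) ∧
        l.filter (fun a => a ∈ U) ≠ l'.filter (fun a => a ∈ U) ∧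
        l.filter (fun a => a ∉ U) ≠ l'.filter (fun a => a ∉ U)) := by
  constructor
  · rintro ⟨i, j, k, hik, -, -, hjk', hij, hk, hL⟩
    have hkU : k ∉ Lminus l i := fun h => not_le.2 hik ((mem_Lminus (hl.2 i)).1 h)
    refine ⟨Lminus l i, Finset.ne_empty_of_mem ((mem_Lminus (hl.2 i)).2 le_rfl),
      fun h => hkU (h ▸ Finset.mem_univ k), ⟨i, rfl⟩, ⟨j, hL⟩,
      filter_mem_Lminus_ne hl hl' hij hL, filter_notMem_ne hkU ?_ ?_ hk⟩
    · exact Lminus_subset_Lminus (hl.2 k) ((mem_Lminus (hl.2 k)).2 hik.le)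
    · exact hL ▸ Lminus_subset_Lminus (hl'.2 k) ((mem_Lminus (hl'.2 k)).2 hjk'.le)
  · rintro ⟨U, -, -, ⟨i₀, rfl⟩, ⟨j₀, hU⟩, hfU, hfC⟩
    obtain ⟨k, hkC, hk⟩ := exists_Lminus_ne (hl.1.filter _) (hl'.1.filter _)
      (toFinset_filter_eq_of_isLinOrd hl hl' _) hfC
    obtain ⟨i, hiU, j, hjU, hij, hL⟩ := exists_ne_Lminus_eq (hl.1.filter _) (hl'.1.filter _)
      (toFinset_filter_eq_of_isLinOrd hl hl' _) hfU
    simp only [List.mem_filter, decide_eq_true_eq] at hkC hiU hjU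
    have hkU' : k ∉ Lminus l' j₀ := hU ▸ hkC.2
    have hjU' : j ∈ Lminus l' j₀ := hU ▸ hjU.2
    refine ⟨i, j, k, gtL_of_mem_Lminus_of_notMem (hl.2 i₀) hiU.2 hkC.2,
      gtL_of_mem_Lminus_of_notMem (hl.2 i₀) hjU.2 hkC.2,
      gtL_of_mem_Lminus_of_notMem (hl'.2 j₀) (hU ▸ hiU.2) hkU',
      gtL_of_mem_Lminus_of_notMem (hl'.2 j₀) hjU' hkU', hij, ?_, ?_⟩
    · rw [Lminus_filter_notMem l hkC.2, Lminus_filter_notMem l' hkC.2] at hk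
      exact fun h => hk (h ▸ rfl)
    · rwa [Lminus_filter_mem _ hiU.2, Lminus_filter_mem _ hjU.2,
        Finset.inter_eq_left.2 (Lminus_subset_Lminus (hl.2 i₀) hiU.2), hU,
        Finset.inter_eq_left.2 (Lminus_subset_Lminus (hl'.2 j₀) hjU')] at hL
end
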